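/- arXiv:2505.09432 — 5 statements merged into one kernel-verified Lean document; each statement's English description precedes it below -/
import Mathlib

section
/- Suppose Condition 1 holds. Then for every θ ∈ ℝ^ϱ, every π ∈ Π(θ), and every η ∈ Δ^K, the convex combination of target regrets is bounded by the surrogate regret: Σ_{t=1}^N π_t · Regret_ℓ(t, η) ≤ Regret_{L_{Ω_T}}(θ, η). -/
open scoped BigOperators
noncomputable section

/-- Score/probability space: `ℝ^ϱ` with Euclidean structure. -/
abbrev E (ϱ : ℕ) : Type := EuclideanSpace ℝ (Fin ϱ)

/-- Euclidean dot product `⟨θ, p⟩`. -/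
def dot {ϱ : ℕ} (θ p : E ϱ) : ℝ := ∑ i, θ i * p i

/-- Fenchel conjugate of an extended-real-valued function:
`Ω^*(θ) = sup_{p ∈ dom Ω} ⟨θ, p⟩ − Ω(p)`. -/
def conj {ϱ : ℕ} (f : E ϱ → EReal) (θ : E ϱ) : EReal :=
  ⨆ p ∈ {q : E ϱ | f q ≠ ⊤}, (((dot θ p : ℝ) : EReal) - f p)

/-- Convexity for extended-real-valued functions. -/
def ErealConvex {ϱ : ℕ} (f : E ϱ → EReal) : Prop :=
  ∀ p q : E ϱ, ∀ a b : ℝ, 0 ≤ a → 0 ≤ b → a + b = 1 →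
    f (a • p + b • q) ≤ (a : EReal) * f p + (b : EReal) * f q

/-- `T(p) = − min_{t ∈ Ŷ} ⟨p, ℓ^ρ(t)⟩`. -/
def Tfun {ϱ N : ℕ} (ℓρ : Fin N → E ϱ) (p : E ϱ) : ℝ := - ⨅ t, dot p (ℓρ t)

/-- The convolutional negentropy `Ω_T = Ω + T`. -/
def OmegaT {ϱ N : ℕ} (Ω : E ϱ → EReal) (ℓρ : Fin N → E ϱ) (p : E ϱ) : EReal :=
  Ω p + ((Tfun ℓρ p : ℝ) : EReal)

/-- Loss-matrix action: `L^ρ π = Σ_t π_t ℓ^ρ(t)`. -/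
def Lrho {ϱ N : ℕ} (ℓρ : Fin N → E ϱ) (π : Fin N → ℝ) : E ϱ :=
  WithLp.toLp 2 (fun i => ∑ t, π t * ℓρ t i)

/-- Condition 1: Ω proper convex l.s.c., `conv(ρ(𝒴)) ⊆ dom Ω`, `dom Ω^* = ℝ^ϱ`. -/
def Condition1 {ϱ K : ℕ} (Ω : E ϱ → EReal) (ρ : Fin K → E ϱ) : Prop :=
  (∀ p, Ω p ≠ ⊥) ∧ (∃ p, Ω p ≠ ⊤) ∧ ErealConvex Ω ∧ LowerSemicontinuous Ω ∧
  (convexHull ℝ (Set.range ρ) ⊆ {p : E ϱ | Ω p ≠ ⊤}) ∧ (∀ θ : E ϱ, conj Ω θ ≠ ⊤)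

/-- `Π(θ) = argmin_{π ∈ Δ^N} Ω^*(θ + L^ρ π)`. -/
def Pii {ϱ N : ℕ} (Ω : E ϱ → EReal) (ℓρ : Fin N → E ϱ) (θ : E ϱ) : Set (Fin N → ℝ) :=
  {π | π ∈ stdSimplex ℝ (Fin N) ∧
       ∀ π' ∈ stdSimplex ℝ (Fin N), conj Ω (θ + Lrho ℓρ π) ≤ conj Ω (θ + Lrho ℓρ π')}

/-- The convolutional Fenchel–Young loss `L_{Ω_T}(θ, y) = Ω_T^*(θ) + Ω_T(ρ(y)) − ⟨θ, ρ(y)⟩`. -/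
def LossFY {ϱ N K : ℕ} (Ω : E ϱ → EReal) (ρ : Fin K → E ϱ) (ℓρ : Fin N → E ϱ)
    (θ : E ϱ) (y : Fin K) : ℝ :=
  (conj (OmegaT Ω ℓρ) θ).toReal + (OmegaT Ω ℓρ (ρ y)).toReal - dot θ (ρ y)

/-- Surrogate risk of the convolutional Fenchel–Young loss. -/
def RsurL {ϱ N K : ℕ} (Ω : E ϱ → EReal) (ρ : Fin K → E ϱ) (ℓρ : Fin N → E ϱ)
    (θ : E ϱ) (η : Fin K → ℝ) : ℝ :=
  ∑ y, η y * LossFY Ω ρ ℓρ θ y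

/-- Surrogate regret of the convolutional Fenchel–Young loss. -/
def RegSur {ϱ N K : ℕ} (Ω : E ϱ → EReal) (ρ : Fin K → E ϱ) (ℓρ : Fin N → E ϱ)
    (θ : E ϱ) (η : Fin K → ℝ) : ℝ :=
  RsurL Ω ρ ℓρ θ η - ⨅ θ' : E ϱ, RsurL Ω ρ ℓρ θ' η

/-- Target regret of a discrete prediction `t` under target loss `ℓ`. -/
def RegTar {N K : ℕ} (ℓ : Fin N → Fin K → ℝ) (t : Fin N) (η : Fin K → ℝ) : ℝ :=
  (∑ y, η y * ℓ t y) - ⨅ t' : Fin N, ∑ y, η y * ℓ t' y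

/-- Real-valued version of a finite Fenchel conjugate. -/
def starFn {ϱ : ℕ} (f : E ϱ → EReal) (θ : E ϱ) : ℝ := (conj f θ).toReal

namespace Aux
variable {ϱ N K : ℕ}

theorem E_sum_apply {K : ℕ} (v : Fin K → E ϱ) (i : Fin ϱ) :
    (∑ y, v y) i = ∑ y, v y i :=
  map_sum (PiLp.proj (𝕜 := ℝ) (p := 2) (β := fun _ : Fin ϱ => ℝ) i) v Finset.univ

theorem dot_comm (p q : E ϱ) : dot p q = dot q p := by
  unfold dot; exact Finset.sum_congr rfl fun i _ => mul_comm _ _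

theorem dot_add_left (θ v p : E ϱ) : dot (θ + v) p = dot θ p + dot v p := by
  unfold dot; rw [← Finset.sum_add_distrib]
  exact Finset.sum_congr rfl fun i _ => by
    show (θ i + v i) * p i = _; ring

theorem dot_combo_left (a b : ℝ) (p q x : E ϱ) :
    dot (a • p + b • q) x = a * dot p x + b * dot q x := by
  unfold dot; rw [Finset.mul_sum, Finset.mul_sum, ← Finset.sum_add_distrib]
  refine Finset.sum_congr rfl fun i _ => ?_
  show (a * p i + b * q i) * x i = _; ring

theorem dot_sum_left (η : Fin K → ℝ) (ρ : Fin K → E ϱ) (x : E ϱ) :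
    dot (∑ y, η y • ρ y) x = ∑ y, η y * dot (ρ y) x := by
  unfold dot
  have h : ∀ i, (∑ y, η y • ρ y) i * x i = ∑ y, η y * (ρ y i * x i) := by
    intro i
    rw [E_sum_apply, Finset.sum_mul]
    refine Finset.sum_congr rfl fun y _ => ?_
    show (η y • ρ y) i * x i = _
    rw [PiLp.smul_apply, smul_eq_mul]; ring
  simp_rw [h]
  rw [Finset.sum_comm]
  exact Finset.sum_congr rfl fun y _ => by rw [Finset.mul_sum]

theorem Lrho_apply (ℓρ : Fin N → E ϱ) (π : Fin N → ℝ) (i : Fin ϱ) :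
    Lrho ℓρ π i = ∑ t, π t * ℓρ t i := rfl

theorem dot_Lrho (ℓρ : Fin N → E ϱ) (π : Fin N → ℝ) (p : E ϱ) :
    dot p (Lrho ℓρ π) = ∑ t, π t * dot p (ℓρ t) := by
  unfold dot
  have h : ∀ i, p i * Lrho ℓρ π i = ∑ t, π t * (p i * ℓρ t i) := by
    intro i
    rw [Lrho_apply, Finset.mul_sum]
    exact Finset.sum_congr rfl fun t _ => by ring
  simp_rw [h]
  rw [Finset.sum_comm]
  exact Finset.sum_congr rfl fun t _ => by rw [Finset.mul_sum]

theorem le_conj {f : E ϱ → EReal} {θ p : E ϱ} (hp : f p ≠ ⊤) :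
    ((dot θ p : ℝ) : EReal) - f p ≤ conj f θ :=
  le_iSup₂ (f := fun q (_ : q ∈ {q : E ϱ | f q ≠ ⊤}) => ((dot θ q : ℝ) : EReal) - f q) p hp

theorem conj_le {f : E ϱ → EReal} {θ : E ϱ} {r : EReal}
    (h : ∀ p, f p ≠ ⊤ → ((dot θ p : ℝ) : EReal) - f p ≤ r) : conj f θ ≤ r :=
  iSup₂_le h

theorem neg_Tfun_le [Nonempty (Fin N)] (ℓρ : Fin N → E ϱ) (p : E ϱ) (t : Fin N) :
    - Tfun ℓρ p ≤ dot p (ℓρ t) := by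
  rw [Tfun, neg_neg]
  exact ciInf_le (Finite.bddBelow_range _) t

theorem exists_Tfun_eq [Nonempty (Fin N)] (ℓρ : Fin N → E ϱ) (p : E ϱ) :
    ∃ t, - Tfun ℓρ p = dot p (ℓρ t) := by
  obtain ⟨t, ht⟩ := Finite.exists_min (fun t => dot p (ℓρ t))
  refine ⟨t, ?_⟩
  rw [Tfun, neg_neg]
  exact le_antisymm (ciInf_le (Finite.bddBelow_range _) t) (le_ciInf ht)

theorem Tfun_convex [Nonempty (Fin N)] (ℓρ : Fin N → E ϱ) (p q : E ϱ) (a b : ℝ)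
    (ha : 0 ≤ a) (hb : 0 ≤ b) :
    Tfun ℓρ (a • p + b • q) ≤ a * Tfun ℓρ p + b * Tfun ℓρ q := by
  obtain ⟨t, ht⟩ := exists_Tfun_eq ℓρ (a • p + b • q)
  have h1 : - Tfun ℓρ p ≤ dot p (ℓρ t) := neg_Tfun_le ℓρ p t
  have h2 : - Tfun ℓρ q ≤ dot q (ℓρ t) := neg_Tfun_le ℓρ q t
  have h3 : dot (a • p + b • q) (ℓρ t) = a * dot p (ℓρ t) + b * dot q (ℓρ t) :=
    dot_combo_left a b p q (ℓρ t)
  nlinarith [mul_le_mul_of_nonneg_left h1 ha, mul_le_mul_of_nonneg_left h2 hb]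

theorem Tfun_continuous [Nonempty (Fin N)] (ℓρ : Fin N → E ϱ) :
    Continuous (Tfun ℓρ) := by
  have h : Continuous fun p : E ϱ => ⨅ t, dot p (ℓρ t) := by
    have : (fun p : E ϱ => ⨅ t, dot p (ℓρ t)) =
        fun p => Finset.univ.inf' Finset.univ_nonempty (fun t => dot p (ℓρ t)) := by
      funext p; rw [Finset.inf'_univ_eq_ciInf]
    rw [this]
    exact Continuous.finset_inf'_apply Finset.univ_nonempty fun t _ => by
      unfold dot
      exact continuous_finset_sum _ fun i _ =>
        ((PiLp.proj (𝕜 := ℝ) (p := 2) (β := fun _ : Fin ϱ => ℝ) i).continuous).mul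
          continuous_const
  exact h.neg


section Omega
variable (Ω : E ϱ → EReal) (ℓρ : Fin N → E ϱ)

theorem omega_eq (hbot : ∀ p, Ω p ≠ ⊥) {p : E ϱ} (hp : Ω p ≠ ⊤) :
    Ω p = (((Ω p).toReal : ℝ) : EReal) := (EReal.coe_toReal hp (hbot p)).symm

theorem omega_convex (hbot : ∀ p, Ω p ≠ ⊥) (hconv : ErealConvex Ω)
    {p q : E ϱ} {a b : ℝ} (hp : Ω p ≠ ⊤) (hq : Ω q ≠ ⊤)
    (ha : 0 ≤ a) (hb : 0 ≤ b) (hab : a + b = 1) :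
    Ω (a • p + b • q) ≠ ⊤ ∧
      (Ω (a • p + b • q)).toReal ≤ a * (Ω p).toReal + b * (Ω q).toReal := by
  have h := hconv p q a b ha hb hab
  rw [omega_eq Ω hbot hp, omega_eq Ω hbot hq] at h
  rw [← EReal.coe_mul, ← EReal.coe_mul, ← EReal.coe_add] at h
  have hne : Ω (a • p + b • q) ≠ ⊤ := fun hT => by
    rw [hT] at h; exact (not_le.2 (EReal.coe_lt_top _)) h
  refine ⟨hne, ?_⟩
  rw [omega_eq Ω hbot hne] at h
  exact_mod_cast h

theorem OmegaT_eq [Nonempty (Fin N)] (hbot : ∀ p, Ω p ≠ ⊥) {p : E ϱ} (hp : Ω p ≠ ⊤) :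
    OmegaT Ω ℓρ p = (((Ω p).toReal + Tfun ℓρ p : ℝ) : EReal) := by
  rw [OmegaT, EReal.coe_add, ← omega_eq Ω hbot hp]

theorem OmegaT_ne_top [Nonempty (Fin N)] (hbot : ∀ p, Ω p ≠ ⊥) {p : E ϱ} (hp : Ω p ≠ ⊤) :
    OmegaT Ω ℓρ p ≠ ⊤ := by
  rw [OmegaT_eq Ω ℓρ hbot hp]; exact EReal.coe_ne_top _

theorem OmegaT_ne_bot (hbot : ∀ p, Ω p ≠ ⊥) (p : E ϱ) :
    OmegaT Ω ℓρ p ≠ ⊥ := by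
  simp only [OmegaT, ne_eq, EReal.add_eq_bot_iff]
  push_neg
  exact ⟨hbot p, EReal.coe_ne_bot _⟩

theorem OmegaT_dom [Nonempty (Fin N)] (hbot : ∀ p, Ω p ≠ ⊥) {p : E ϱ}
    (hp : OmegaT Ω ℓρ p ≠ ⊤) : Ω p ≠ ⊤ := by
  intro hT
  apply hp
  rw [OmegaT, hT, EReal.top_add_coe]

theorem OmegaT_toReal [Nonempty (Fin N)] (hbot : ∀ p, Ω p ≠ ⊥) {p : E ϱ} (hp : Ω p ≠ ⊤) :
    (OmegaT Ω ℓρ p).toReal = (Ω p).toReal + Tfun ℓρ p := by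
  rw [OmegaT_eq Ω ℓρ hbot hp, EReal.toReal_coe]

/-- `Ω_T^* θ ≤ Ω^*(θ + ℓρ t₀)`, hence never `⊤`. -/
theorem conj_OmegaT_le [Nonempty (Fin N)] (hbot : ∀ p, Ω p ≠ ⊥) (θ : E ϱ) (t₀ : Fin N) :
    conj (OmegaT Ω ℓρ) θ ≤ conj Ω (θ + ℓρ t₀) := by
  refine conj_le fun p hp => ?_
  have hΩp : Ω p ≠ ⊤ := OmegaT_dom Ω ℓρ hbot hp
  have h1 : ((dot θ p : ℝ) : EReal) - OmegaT Ω ℓρ p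
      = ((dot θ p - (Ω p).toReal - Tfun ℓρ p : ℝ) : EReal) := by
    rw [OmegaT_eq Ω ℓρ hbot hΩp, ← EReal.coe_sub]
    exact EReal.coe_eq_coe_iff.2 (by ring)
  have h2 : ((dot (θ + ℓρ t₀) p : ℝ) : EReal) - Ω p
      = ((dot θ p + dot p (ℓρ t₀) - (Ω p).toReal : ℝ) : EReal) := by
    conv_lhs => rw [omega_eq Ω hbot hΩp]
    rw [← EReal.coe_sub]
    exact EReal.coe_eq_coe_iff.2 (by rw [dot_add_left, dot_comm (ℓρ t₀) p])
  calc ((dot θ p : ℝ) : EReal) - OmegaT Ω ℓρ p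
      ≤ ((dot (θ + ℓρ t₀) p : ℝ) : EReal) - Ω p := by
        rw [h1, h2]
        apply EReal.coe_le_coe_iff.2
        have := neg_Tfun_le ℓρ p t₀
        linarith
    _ ≤ conj Ω (θ + ℓρ t₀) := le_conj hΩp

theorem conj_OmegaT_ne_top [Nonempty (Fin N)] (hbot : ∀ p, Ω p ≠ ⊥)
    (hstar : ∀ θ', conj Ω θ' ≠ ⊤) (θ : E ϱ) : conj (OmegaT Ω ℓρ) θ ≠ ⊤ := by
  intro hT
  have t₀ : Fin N := Classical.arbitrary _
  have := conj_OmegaT_le Ω ℓρ hbot θ t₀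
  rw [hT, top_le_iff] at this
  exact hstar _ this

/-- lower bound at a point of the domain. -/
theorem coe_le_conj {f : E ϱ → EReal} (hf : ∀ p, f p ≠ ⊥)
    {p θ : E ϱ} (hp : f p ≠ ⊤) :
    ((dot θ p - (f p).toReal : ℝ) : EReal) ≤ conj f θ := by
  calc ((dot θ p - (f p).toReal : ℝ) : EReal)
      = ((dot θ p : ℝ) : EReal) - f p := by
        rw [EReal.coe_sub, EReal.coe_toReal hp (hf p)]
    _ ≤ conj f θ := le_conj hp

end Omega

theorem lemA [Nonempty (Fin N)] (Ω : E ϱ → EReal) (ℓρ : Fin N → E ϱ)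
    (hbot : ∀ p, Ω p ≠ ⊥) (hdom : ∃ p, Ω p ≠ ⊤) (hconv : ErealConvex Ω)
    (hstar : ∀ θ', conj Ω θ' ≠ ⊤) (θ : E ϱ) :
    ∃ π' ∈ stdSimplex ℝ (Fin N), conj Ω (θ + Lrho ℓρ π') ≤ conj (OmegaT Ω ℓρ) θ := by
  obtain ⟨p₀, hp₀⟩ := hdom
  have hOTbot : ∀ p, OmegaT Ω ℓρ p ≠ ⊥ := OmegaT_ne_bot Ω ℓρ hbot
  have hnetop : conj (OmegaT Ω ℓρ) θ ≠ ⊤ := conj_OmegaT_ne_top Ω ℓρ hbot hstar θ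
  have hnebot : conj (OmegaT Ω ℓρ) θ ≠ ⊥ := by
    intro hB
    have h := coe_le_conj (θ := θ) hOTbot (OmegaT_ne_top Ω ℓρ hbot hp₀)
    rw [hB, le_bot_iff] at h
    exact EReal.coe_ne_bot _ h
  set r : ℝ := (conj (OmegaT Ω ℓρ) θ).toReal with hrdef
  have hr : conj (OmegaT Ω ℓρ) θ = (r : EReal) := (EReal.coe_toReal hnetop hnebot).symm
  have key : ∀ p, Ω p ≠ ⊤ → dot θ p - (Ω p).toReal - Tfun ℓρ p ≤ r := by
    intro p hp
    have h := coe_le_conj (θ := θ) hOTbot (OmegaT_ne_top Ω ℓρ hbot hp)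
    rw [hr, EReal.coe_le_coe_iff, OmegaT_toReal Ω ℓρ hbot hp] at h
    linarith
  set φ : E ϱ → Fin N → ℝ := fun p t => dot θ p + dot p (ℓρ t) - (Ω p).toReal - r with hφdef
  have key2 : ∀ p, Ω p ≠ ⊤ → ∃ t, φ p t ≤ 0 := by
    intro p hp
    obtain ⟨t, ht⟩ := exists_Tfun_eq ℓρ p
    refine ⟨t, ?_⟩
    have := key p hp
    simp only [hφdef]
    linarith [ht]
  set A : Set (Fin N → ℝ) := {u | ∃ p, Ω p ≠ ⊤ ∧ ∀ t, u t < φ p t} with hAdef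
  have hA0 : (0 : Fin N → ℝ) ∉ A := by
    rintro ⟨p, hp, hlt⟩
    obtain ⟨t, ht⟩ := key2 p hp
    have := hlt t
    rw [Pi.zero_apply] at this
    linarith
  have hAopen : IsOpen A := by
    have hAeq : A = ⋃ p ∈ {p : E ϱ | Ω p ≠ ⊤}, ⋂ t, {u : Fin N → ℝ | u t < φ p t} := by
      ext u
      simp only [hAdef, Set.mem_setOf_eq, Set.mem_iUnion, Set.mem_iInter, exists_prop]
    rw [hAeq]
    exact isOpen_biUnion fun p _ => isOpen_iInter_of_finite fun t =>
      isOpen_lt (continuous_apply t) continuous_const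
  have hAconv : Convex ℝ A := by
    rintro u ⟨p, hp, hu⟩ v ⟨q, hq, hv⟩ a b ha hb hab
    rcases eq_or_lt_of_le ha with h0 | hapos
    · have ha0 : a = 0 := h0.symm
      have hb1 : b = 1 := by linarith
      subst ha0; subst hb1
      simpa using ⟨q, hq, hv⟩
    rcases eq_or_lt_of_le hb with h0 | hbpos
    · have hb0 : b = 0 := h0.symm
      have ha1 : a = 1 := by linarith
      subst hb0; subst ha1
      simpa using ⟨p, hp, hu⟩
    obtain ⟨hnt, hcv⟩ := omega_convex Ω hbot hconv hp hq ha hb hab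
    refine ⟨a • p + b • q, hnt, fun t => ?_⟩
    have hcoord : (a • u + b • v) t = a * u t + b * v t := by
      simp [Pi.add_apply, Pi.smul_apply, smul_eq_mul]
    have hdot1 : dot θ (a • p + b • q) = a * dot θ p + b * dot θ q := by
      rw [dot_comm, dot_combo_left, dot_comm p θ, dot_comm q θ]
    have hdot2 : dot (a • p + b • q) (ℓρ t) = a * dot p (ℓρ t) + b * dot q (ℓρ t) :=
      dot_combo_left a b p q (ℓρ t)
    have h1 : a * u t < a * φ p t := by exact (mul_lt_mul_iff_right₀ hapos).2 (hu t)
    have h2 : b * v t < b * φ q t := by exact (mul_lt_mul_iff_right₀ hbpos).2 (hv t)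
    rw [hcoord]
    simp only [hφdef] at h1 h2 ⊢
    have habr : a * r + b * r = r := by rw [← add_mul, hab, one_mul]
    linarith
  obtain ⟨f, hf⟩ := geometric_hahn_banach_open_point hAconv hAopen hA0
  have hf0 : ∀ u ∈ A, f u < 0 := by
    intro u hu
    have := hf u hu
    rwa [map_zero] at this
  set e : Fin N → (Fin N → ℝ) := fun t => Pi.single t (1 : ℝ) with hedef
  set lam : Fin N → ℝ := fun t => f (e t) with hlamdef
  have hrep : ∀ u, f u = ∑ t, u t * lam t := by
    intro u
    have hu : u = ∑ t, u t • e t := by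
      funext s
      rw [Finset.sum_apply]
      simp [hedef, Pi.single_apply, mul_ite, Finset.sum_ite_eq]
    conv_lhs => rw [hu]
    rw [map_sum]
    exact Finset.sum_congr rfl fun t _ => by rw [map_smul, smul_eq_mul]
  set u₀ : Fin N → ℝ := fun t => φ p₀ t - 1 with hu₀def
  have hu₀A : u₀ ∈ A := ⟨p₀, hp₀, fun t => by simp only [hu₀def]; linarith⟩
  have hfu₀ : f u₀ < 0 := hf0 u₀ hu₀A
  have hlam0 : ∀ t, 0 ≤ lam t := by
    intro t
    by_contra hneg
    push_neg at hneg
    set M : ℝ := (f u₀ - 1) / lam t with hMdef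
    have hM : 0 < M := div_pos_iff.2 (Or.inr ⟨by linarith, hneg⟩)
    have hmem : (u₀ - M • e t) ∈ A := by
      refine ⟨p₀, hp₀, fun s => ?_⟩
      have h1 : (u₀ - M • e t) s ≤ u₀ s := by
        have h2 : (0:ℝ) ≤ M * e t s := by
          refine mul_nonneg hM.le ?_
          by_cases hst : s = t <;> simp [hedef, Pi.single_apply, hst]
        simp only [Pi.sub_apply, Pi.smul_apply, smul_eq_mul]
        linarith
      calc (u₀ - M • e t) s ≤ u₀ s := h1
        _ < φ p₀ s := by simp only [hu₀def]; linarith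
    have hlt := hf0 _ hmem
    rw [map_sub, map_smul, smul_eq_mul] at hlt
    have hMl : M * lam t = f u₀ - 1 := by
      rw [hMdef, div_mul_cancel₀ _ (ne_of_lt hneg)]
    rw [hMl] at hlt
    linarith
  set S : ℝ := ∑ t, lam t with hSdef
  have hS0 : 0 ≤ S := Finset.sum_nonneg fun t _ => hlam0 t
  have hSne : S ≠ 0 := by
    intro h0
    have hall : ∀ t ∈ Finset.univ, lam t = 0 :=
      (Finset.sum_eq_zero_iff_of_nonneg fun t _ => hlam0 t).1 h0
    have : f u₀ = 0 := by
      rw [hrep u₀]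
      exact Finset.sum_eq_zero fun t _ => by rw [hall t (Finset.mem_univ t), mul_zero]
    linarith
  have hSpos : 0 < S := lt_of_le_of_ne hS0 (Ne.symm hSne)
  set π' : Fin N → ℝ := fun t => lam t / S with hπ'def
  have hπ'mem : π' ∈ stdSimplex ℝ (Fin N) := by
    constructor
    · exact fun t => div_nonneg (hlam0 t) hS0
    · simp only [hπ'def]
      rw [← Finset.sum_div, div_self hSne]
  have hπ'sum : ∑ t, π' t = 1 := hπ'mem.2
  have key3 : ∀ p, Ω p ≠ ⊤ → dot (θ + Lrho ℓρ π') p - (Ω p).toReal ≤ r := by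
    intro p hp
    have hX : ∀ ε : ℝ, 0 < ε → dot θ p + dot p (Lrho ℓρ π') - (Ω p).toReal - r < ε := by
      intro ε hεpos
      have hmem : (fun t => φ p t - ε) ∈ A := ⟨p, hp, fun t => by simp; linarith⟩
      have hlt := hf0 _ hmem
      rw [hrep] at hlt
      have h1 : ∑ t, lam t * φ p t < ε * S := by
        have heq : ∑ t, (φ p t - ε) * lam t = ∑ t, lam t * φ p t - ε * S := by
          rw [hSdef, Finset.mul_sum, ← Finset.sum_sub_distrib]
          exact Finset.sum_congr rfl fun t _ => by ring
        rw [heq] at hlt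
        linarith
      have h2 : ∑ t, π' t * φ p t = (∑ t, lam t * φ p t) / S := by
        rw [Finset.sum_div]
        exact Finset.sum_congr rfl fun t _ => by
          simp only [hπ'def]; ring
      have h3 : ∑ t, π' t * φ p t < ε := by
        rw [h2]
        rw [div_lt_iff₀ hSpos]
        linarith
      have h4 : ∑ t, π' t * φ p t
          = dot θ p + dot p (Lrho ℓρ π') - (Ω p).toReal - r := by
        rw [dot_Lrho]
        calc ∑ t, π' t * φ p t
            = ∑ t, (π' t * (dot θ p - (Ω p).toReal - r) + π' t * dot p (ℓρ t)) := by
              refine Finset.sum_congr rfl fun t _ => ?_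
              simp only [hφdef]; ring
          _ = (∑ t, π' t) * (dot θ p - (Ω p).toReal - r) + ∑ t, π' t * dot p (ℓρ t) := by
              rw [Finset.sum_add_distrib, Finset.sum_mul]
          _ = dot θ p + (∑ t, π' t * dot p (ℓρ t)) - (Ω p).toReal - r := by
              rw [hπ'sum]; ring
      linarith
    have hle : dot θ p + dot p (Lrho ℓρ π') - (Ω p).toReal - r ≤ 0 := by
      by_contra hcon
      push_neg at hcon
      exact lt_irrefl _ (hX _ hcon)
    rw [dot_add_left, dot_comm (Lrho ℓρ π') p]
    linarith
  refine ⟨π', hπ'mem, ?_⟩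
  rw [hr]
  refine conj_le fun p hp => ?_
  calc ((dot (θ + Lrho ℓρ π') p : ℝ) : EReal) - Ω p
      = ((dot (θ + Lrho ℓρ π') p - (Ω p).toReal : ℝ) : EReal) := by
        rw [EReal.coe_sub, ← omega_eq Ω hbot hp]
    _ ≤ (r : EReal) := EReal.coe_le_coe_iff.2 (key3 p hp)


theorem epi_elim [Nonempty (Fin N)] (Ω : E ϱ → EReal) (ℓρ : Fin N → E ϱ)
    (hbot : ∀ p, Ω p ≠ ⊥) {p : E ϱ} {s : ℝ} (h : OmegaT Ω ℓρ p ≤ (s : EReal)) :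
    Ω p ≠ ⊤ ∧ (Ω p).toReal + Tfun ℓρ p ≤ s := by
  have hΩp : Ω p ≠ ⊤ := by
    intro hT
    rw [OmegaT, hT, EReal.top_add_coe, top_le_iff] at h
    exact EReal.coe_ne_top s h
  rw [OmegaT_eq Ω ℓρ hbot hΩp, EReal.coe_le_coe_iff] at h
  exact ⟨hΩp, h⟩

theorem lemB [Nonempty (Fin N)] (Ω : E ϱ → EReal) (ℓρ : Fin N → E ϱ)
    (hbot : ∀ p, Ω p ≠ ⊥) (hconv : ErealConvex Ω) (hlsc : LowerSemicontinuous Ω)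
    (pb : E ϱ) (hpb : Ω pb ≠ ⊤) {ε : ℝ} (hε : 0 < ε) :
    ∃ θ' : E ϱ, conj (OmegaT Ω ℓρ) θ'
      ≤ ((dot θ' pb - (OmegaT Ω ℓρ pb).toReal + ε : ℝ) : EReal) := by
  classical
  set G : E ϱ → EReal := OmegaT Ω ℓρ with hGdef
  have hGlsc : LowerSemicontinuous G := by
    refine LowerSemicontinuous.add' hlsc
      ((continuous_coe_real_ereal.comp (Tfun_continuous ℓρ)).lowerSemicontinuous) ?_
    intro x
    apply EReal.continuousAt_add
    · exact Or.inr (EReal.coe_ne_bot _)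
    · exact Or.inr (EReal.coe_ne_top _)
  set epi : Set (E ϱ × ℝ) := {z | G z.1 ≤ (z.2 : EReal)} with hepidef
  have hepiC : IsClosed epi := by
    rw [← isOpen_compl_iff]
    refine isOpen_iff_forall_mem_open.2 fun z hz => ?_
    have hlt : ((z.2 : ℝ) : EReal) < G z.1 := not_le.1 hz
    obtain ⟨x, hx1, hx2⟩ := exists_between hlt
    have hxt : x ≠ ⊤ := hx2.ne_top
    have hxb : x ≠ ⊥ := by
      intro hB; rw [hB] at hx1; exact not_lt_bot hx1
    set y : ℝ := x.toReal with hydef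
    have hxy : x = (y : EReal) := (EReal.coe_toReal hxt hxb).symm
    refine ⟨{w : E ϱ × ℝ | (y : EReal) < G w.1} ∩ {w : E ϱ × ℝ | w.2 < y}, ?_, ?_, ?_⟩
    · rintro w ⟨hw1, hw2⟩
      simp only [Set.mem_compl_iff, hepidef, Set.mem_setOf_eq, not_le]
      calc ((w.2 : ℝ) : EReal) < (y : EReal) := EReal.coe_lt_coe_iff.2 hw2
        _ < G w.1 := hw1
    · refine IsOpen.inter ?_ ?_
      · have h1 : IsOpen {p : E ϱ | (y : EReal) < G p} := by
          have := lowerSemicontinuous_iff_isOpen_preimage.1 hGlsc (y : EReal)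
          simpa [Set.preimage, Set.Ioi] using this
        exact h1.preimage continuous_fst
      · exact (isOpen_Iio (a := y)).preimage continuous_snd
    · constructor
      · simp only [Set.mem_setOf_eq]; rw [← hxy]; exact hx2
      · simp only [Set.mem_setOf_eq]
        rw [hxy] at hx1
        exact EReal.coe_lt_coe_iff.1 hx1
  have hepiConv : Convex ℝ epi := by
    rintro ⟨p, s⟩ hps ⟨q, u⟩ hqu a b ha hb hab
    obtain ⟨hΩp, hps'⟩ := epi_elim Ω ℓρ hbot hps
    obtain ⟨hΩq, hqu'⟩ := epi_elim Ω ℓρ hbot hqu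
    obtain ⟨hnt, hcv⟩ := omega_convex Ω hbot hconv hΩp hΩq ha hb hab
    have hT := Tfun_convex ℓρ p q a b ha hb
    have hcombo : a • ((p, s) : E ϱ × ℝ) + b • (q, u) = (a • p + b • q, a * s + b * u) := by
      simp [Prod.ext_iff, smul_eq_mul]
    rw [hcombo]
    show G (a • p + b • q) ≤ ((a * s + b * u : ℝ) : EReal)
    rw [hGdef, OmegaT_eq Ω ℓρ hbot hnt, EReal.coe_le_coe_iff]
    nlinarith [mul_le_mul_of_nonneg_left hps' ha, mul_le_mul_of_nonneg_left hqu' hb]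
  set m : ℝ := (G pb).toReal with hmdef
  have hGpb : G pb = (m : EReal) := by
    rw [hmdef, hGdef, OmegaT_eq Ω ℓρ hbot hpb, EReal.toReal_coe]
  have hx₀ : ((pb, m - ε) : E ϱ × ℝ) ∉ epi := by
    simp only [hepidef, Set.mem_setOf_eq, not_le, hGpb]
    exact EReal.coe_lt_coe_iff.2 (by linarith)
  obtain ⟨f, u, hfx₀, hepi_gt⟩ := geometric_hahn_banach_point_closed hepiConv hepiC hx₀
  set G' : E ϱ →L[ℝ] ℝ := f.comp (ContinuousLinearMap.inl ℝ (E ϱ) ℝ) with hG'def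
  set b : ℝ := f ((0 : E ϱ), (1 : ℝ)) with hbdef
  have hsplit : ∀ (p : E ϱ) (s : ℝ), f (p, s) = G' p + s * b := by
    intro p s
    have h1 : ((p, s) : E ϱ × ℝ) = (p, 0) + s • ((0 : E ϱ), (1 : ℝ)) := by
      simp [Prod.ext_iff, smul_eq_mul]
    rw [h1, map_add, map_smul, smul_eq_mul]
    rfl
  have hmem_m : ((pb, m) : E ϱ × ℝ) ∈ epi := by
    simp only [hepidef, Set.mem_setOf_eq, hGpb]
    exact le_refl _
  have hum : u < G' pb + m * b := by
    have := hepi_gt _ hmem_m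
    rwa [hsplit] at this
  have hx₀val : G' pb + (m - ε) * b < u := by
    have := hfx₀
    rwa [hsplit] at this
  have hbpos : 0 < b := by nlinarith
  set θ' : E ϱ := WithLp.toLp 2 (fun i => -(G' (EuclideanSpace.single i 1)) / b : Fin ϱ → ℝ) with hθ'def
  have hθ'app : ∀ i, θ' i = -(G' (EuclideanSpace.single i 1)) / b := fun i => rfl
  have hgrep : ∀ p : E ϱ, G' p = ∑ i, p i * G' (EuclideanSpace.single i 1) := by
    intro p
    have h := (EuclideanSpace.basisFun (Fin ϱ) ℝ).sum_repr p
    conv_lhs => rw [← h]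
    rw [map_sum]
    refine Finset.sum_congr rfl fun i _ => ?_
    rw [EuclideanSpace.basisFun_repr, EuclideanSpace.basisFun_apply, map_smul]
    simp [smul_eq_mul]
  have hdot : ∀ p : E ϱ, dot θ' p = -(G' p) / b := by
    intro p
    unfold dot
    calc ∑ i, θ' i * p i
        = ∑ i, -(p i * G' (EuclideanSpace.single i 1)) / b :=
          Finset.sum_congr rfl fun i _ => by rw [hθ'app]; ring
      _ = (∑ i, -(p i * G' (EuclideanSpace.single i 1))) / b := by rw [Finset.sum_div]
      _ = -(∑ i, p i * G' (EuclideanSpace.single i 1)) / b := by rw [Finset.sum_neg_distrib]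
      _ = -(G' p) / b := by rw [← hgrep p]
  refine ⟨θ', ?_⟩
  have hbound : ∀ p, G p ≠ ⊤ → dot θ' p - (G p).toReal ≤ -u / b := by
    intro p hp
    have hΩp : Ω p ≠ ⊤ := OmegaT_dom Ω ℓρ hbot hp
    have hmem : ((p, (G p).toReal) : E ϱ × ℝ) ∈ epi := by
      simp only [hepidef, Set.mem_setOf_eq]
      rw [EReal.coe_toReal hp (OmegaT_ne_bot Ω ℓρ hbot p)]
    have hgt := hepi_gt _ hmem
    rw [hsplit] at hgt
    have hδ : (dot θ' p - (G p).toReal) * b < (-u / b) * b := by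
      have h1 : (dot θ' p - (G p).toReal) * b = -(G' p) - (G p).toReal * b := by
        rw [hdot]; field_simp
      have h2 : (-u / b) * b = -u := by field_simp
      rw [h1, h2]; linarith
    exact le_of_lt ((mul_lt_mul_iff_left₀ hbpos).1 hδ)
  have hconjle : conj G θ' ≤ ((-u / b : ℝ) : EReal) := by
    refine conj_le fun p hp => ?_
    have hco : ((dot θ' p : ℝ) : EReal) - G p = ((dot θ' p - (G p).toReal : ℝ) : EReal) := by
      rw [EReal.coe_sub, EReal.coe_toReal hp (OmegaT_ne_bot Ω ℓρ hbot p)]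
    rw [hco]
    exact EReal.coe_le_coe_iff.2 (hbound p hp)
  refine hconjle.trans (EReal.coe_le_coe_iff.2 ?_)
  have h3 : (-u / b) * b = -u := by field_simp
  have h5 : (-u / b) * b < (dot θ' pb - m + ε) * b := by
    have h6 : (dot θ' pb - m + ε) * b = -(G' pb) - m * b + ε * b := by
      rw [hdot]; field_simp
    rw [h3, h6]
    nlinarith
  exact le_of_lt ((mul_lt_mul_iff_left₀ hbpos).1 h5)

end Aux

/-- Lower bound of the surrogate regret: for every `θ`, `π ∈ Π(θ)` and `η ∈ Δ^K`,
`Σ_t π_t Regret_ℓ(t,η) ≤ Regret_{L_{Ω_T}}(θ,η)`. -/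
theorem surrogate_regret_lower_bound
    {K N ϱ : ℕ} (hK : 0 < K) (hN : 0 < N) (hϱ : 0 < ϱ)
    (Ω : E ϱ → EReal) (ρ : Fin K → E ϱ) (ℓρ : Fin N → E ϱ)
    (ℓ : Fin N → Fin K → ℝ) (c : Fin K → ℝ)
    (hdec : ∀ t y, ℓ t y = dot (ρ y) (ℓρ t) + c y)
    (hcond : Condition1 Ω ρ) :
    ∀ θ : E ϱ, ∀ π ∈ Pii Ω ℓρ θ, ∀ η ∈ stdSimplex ℝ (Fin K),
      ∑ t, π t * RegTar ℓ t η ≤ RegSur Ω ρ ℓρ θ η := by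
  obtain ⟨hbot, hdom, hconv, hlsc, hhull, hstar⟩ := hcond
  intro θ π hπ η hη
  haveI : Nonempty (Fin N) := ⟨⟨0, hN⟩⟩
  haveI : Nonempty (Fin K) := ⟨⟨0, hK⟩⟩
  obtain ⟨hπ0, hπopt⟩ := hπ
  have hπsum : ∑ t, π t = 1 := hπ0.2
  have hη0 : ∀ y, 0 ≤ η y := hη.1
  have hηsum : ∑ y, η y = 1 := hη.2
  set pb : E ϱ := ∑ y, η y • ρ y with hpbdef
  have hpbhull : pb ∈ convexHull ℝ (Set.range ρ) :=
    (convex_convexHull ℝ _).sum_mem (fun y _ => hη0 y) hηsum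
      (fun y _ => subset_convexHull ℝ _ (Set.mem_range_self y))
  have hpbdom : Ω pb ≠ ⊤ := hhull hpbhull
  have hdotpb : ∀ x, dot pb x = ∑ y, η y * dot (ρ y) x := fun x => Aux.dot_sum_left η ρ x
  -- LHS computation
  have hR : ∀ t, ∑ y, η y * ℓ t y = dot pb (ℓρ t) + ∑ y, η y * c y := by
    intro t
    rw [hdotpb, ← Finset.sum_add_distrib]
    refine Finset.sum_congr rfl fun y _ => by rw [hdec t y]; ring
  have hInfR : (⨅ t' : Fin N, ∑ y, η y * ℓ t' y) = -Tfun ℓρ pb + ∑ y, η y * c y := by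
    obtain ⟨t₀, ht₀⟩ := Finite.exists_min (fun t => dot pb (ℓρ t))
    have hminT : -Tfun ℓρ pb = dot pb (ℓρ t₀) := by
      rw [Tfun, neg_neg]
      exact le_antisymm (ciInf_le (Finite.bddBelow_range _) t₀) (le_ciInf ht₀)
    have heq : (⨅ t' : Fin N, ∑ y, η y * ℓ t' y) = dot pb (ℓρ t₀) + ∑ y, η y * c y := by
      apply le_antisymm
      · exact (ciInf_le (Finite.bddBelow_range _) t₀).trans (le_of_eq (hR t₀))
      · refine le_ciInf fun t => ?_
        rw [hR t]
        have := ht₀ t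
        linarith
    rw [heq, hminT]
  have hRegTar : ∀ t, RegTar ℓ t η = dot pb (ℓρ t) + Tfun ℓρ pb := by
    intro t
    rw [RegTar, hR t, hInfR]
    ring
  have hLHS : ∑ t, π t * RegTar ℓ t η = dot pb (Lrho ℓρ π) + Tfun ℓρ pb := by
    rw [Aux.dot_Lrho]
    calc ∑ t, π t * RegTar ℓ t η
        = ∑ t, (π t * dot pb (ℓρ t) + π t * Tfun ℓρ pb) :=
          Finset.sum_congr rfl fun t _ => by rw [hRegTar t]; ring
      _ = (∑ t, π t * dot pb (ℓρ t)) + (∑ t, π t) * Tfun ℓρ pb := by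
          rw [Finset.sum_add_distrib, Finset.sum_mul]
      _ = _ := by rw [hπsum]; ring
  -- RHS pieces
  have hGbot : ∀ p, OmegaT Ω ℓρ p ≠ ⊥ := Aux.OmegaT_ne_bot Ω ℓρ hbot
  have hGpbne : OmegaT Ω ℓρ pb ≠ ⊤ := Aux.OmegaT_ne_top Ω ℓρ hbot hpbdom
  have hm : (OmegaT Ω ℓρ pb).toReal = (Ω pb).toReal + Tfun ℓρ pb :=
    Aux.OmegaT_toReal Ω ℓρ hbot hpbdom
  have hconjne : ∀ θ' : E ϱ, conj (OmegaT Ω ℓρ) θ' ≠ ⊤ :=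
    Aux.conj_OmegaT_ne_top Ω ℓρ hbot hstar
  have hconjnb : ∀ θ' : E ϱ, conj (OmegaT Ω ℓρ) θ' ≠ ⊥ := by
    intro θ'
    intro hB
    have h := Aux.coe_le_conj (f := OmegaT Ω ℓρ) hGbot hGpbne (θ := θ')
    rw [hB, le_bot_iff] at h
    exact EReal.coe_ne_bot _ h
  have hconjlow : ∀ θ' : E ϱ,
      dot θ' pb - (OmegaT Ω ℓρ pb).toReal ≤ (conj (OmegaT Ω ℓρ) θ').toReal := by
    intro θ'
    have h := Aux.coe_le_conj (f := OmegaT Ω ℓρ) hGbot hGpbne (θ := θ')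
    have h2 := EReal.toReal_le_toReal h (EReal.coe_ne_bot _) (hconjne θ')
    rwa [EReal.toReal_coe] at h2
  have hdotθpb : ∀ θ' : E ϱ, ∑ y, η y * dot θ' (ρ y) = dot θ' pb := by
    intro θ'
    rw [Aux.dot_comm θ' pb, hdotpb θ']
    exact Finset.sum_congr rfl fun y _ => by rw [Aux.dot_comm (ρ y) θ']
  have hRsur : ∀ θ' : E ϱ, RsurL Ω ρ ℓρ θ' η
      = (conj (OmegaT Ω ℓρ) θ').toReal + (∑ y, η y * (OmegaT Ω ℓρ (ρ y)).toReal)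
        - dot θ' pb := by
    intro θ'
    rw [RsurL]
    calc ∑ y, η y * LossFY Ω ρ ℓρ θ' y
        = ∑ y, (η y * (conj (OmegaT Ω ℓρ) θ').toReal
            + η y * (OmegaT Ω ℓρ (ρ y)).toReal - η y * dot θ' (ρ y)) :=
          Finset.sum_congr rfl fun y _ => by rw [LossFY]; ring
      _ = _ := by
          rw [Finset.sum_sub_distrib, Finset.sum_add_distrib, ← Finset.sum_mul, hηsum,
            one_mul, hdotθpb θ']
  set C : ℝ := ∑ y, η y * (OmegaT Ω ℓρ (ρ y)).toReal with hCdef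
  set m : ℝ := (OmegaT Ω ℓρ pb).toReal with hmdef
  have hlb : ∀ θ' : E ϱ, C - m ≤ RsurL Ω ρ ℓρ θ' η := by
    intro θ'
    rw [hRsur θ']
    have := hconjlow θ'
    linarith
  have hbdd : BddBelow (Set.range fun θ' : E ϱ => RsurL Ω ρ ℓρ θ' η) := by
    refine ⟨C - m, ?_⟩
    rintro _ ⟨θ', rfl⟩
    exact hlb θ'
  have hInfSur : (⨅ θ' : E ϱ, RsurL Ω ρ ℓρ θ' η) ≤ C - m := by
    by_contra hcon
    push_neg at hcon
    set δ : ℝ := (⨅ θ' : E ϱ, RsurL Ω ρ ℓρ θ' η) - (C - m) with hδdef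
    have hδpos : 0 < δ := by simp only [hδdef]; linarith
    obtain ⟨θ', hθ'⟩ := Aux.lemB Ω ℓρ hbot hconv hlsc pb hpbdom (ε := δ / 2) (by linarith)
    have h2 : (conj (OmegaT Ω ℓρ) θ').toReal ≤ dot θ' pb - m + δ / 2 := by
      have h3 := EReal.toReal_le_toReal hθ' (hconjnb θ') (EReal.coe_ne_top _)
      rwa [EReal.toReal_coe] at h3
    have h4 : RsurL Ω ρ ℓρ θ' η ≤ C - m + δ / 2 := by
      rw [hRsur θ']
      linarith
    have h5 := ciInf_le hbdd θ'
    have h6 : (⨅ θ'' : E ϱ, RsurL Ω ρ ℓρ θ'' η) = C - m + δ := by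
      simp only [hδdef]; ring
    linarith
  -- final comparison
  rw [RegSur, hRsur θ, hLHS]
  obtain ⟨π', hπ'mem, hπ'le⟩ := Aux.lemA Ω ℓρ hbot hdom hconv hstar θ
  have hchain : conj Ω (θ + Lrho ℓρ π) ≤ conj (OmegaT Ω ℓρ) θ :=
    (hπopt π' hπ'mem).trans hπ'le
  have hkey : dot θ pb + dot pb (Lrho ℓρ π) - (Ω pb).toReal
      ≤ (conj (OmegaT Ω ℓρ) θ).toReal := by
    have h1 : ((dot (θ + Lrho ℓρ π) pb - (Ω pb).toReal : ℝ) : EReal)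
        ≤ conj (OmegaT Ω ℓρ) θ :=
      (Aux.coe_le_conj (f := Ω) hbot hpbdom).trans hchain
    have h2 := EReal.toReal_le_toReal h1 (EReal.coe_ne_bot _) (hconjne θ)
    rw [EReal.toReal_coe, Aux.dot_add_left, Aux.dot_comm (Lrho ℓρ π) pb] at h2
    linarith
  have hmv : m = (Ω pb).toReal + Tfun ℓρ pb := hm
  linarith
end
end

section
/- Suppose Condition 1 holds, and let φ be any π-argmax link. Then the pair (L_{Ω_T}, φ) admits the linear surrogate regret bound Regret_ℓ(φ(θ), η) ≤ N · Regret_{L_{Ω_T}}(θ, η) for all θ ∈ ℝ^ϱ and all η ∈ Δ^K. -/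
open scoped BigOperators
noncomputable section

/-! ### dot product lemmas -/

lemma dot_comm {ϱ : ℕ} (θ p : E ϱ) : dot θ p = dot p θ := by
  unfold dot; exact Finset.sum_congr rfl fun i _ => mul_comm _ _

lemma dot_add_left {ϱ : ℕ} (θ θ' p : E ϱ) : dot (θ + θ') p = dot θ p + dot θ' p := by
  unfold dot
  rw [← Finset.sum_add_distrib]
  refine Finset.sum_congr rfl fun i _ => ?_
  have : (θ + θ') i = θ i + θ' i := rfl
  rw [this, add_mul]

lemma dot_smul_left {ϱ : ℕ} (a : ℝ) (θ p : E ϱ) : dot (a • θ) p = a * dot θ p := by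
  unfold dot
  rw [Finset.mul_sum]
  refine Finset.sum_congr rfl fun i _ => ?_
  have : (a • θ) i = a * θ i := rfl
  rw [this, mul_assoc]

lemma dot_sub_left {ϱ : ℕ} (θ θ' p : E ϱ) : dot (θ - θ') p = dot θ p - dot θ' p := by
  have h : θ - θ' = θ + (-1 : ℝ) • θ' := by
    rw [neg_one_smul]; abel
  rw [h, dot_add_left, dot_smul_left]; ring

lemma dot_sum_left {ϱ K : ℕ} (v : Fin K → E ϱ) (p : E ϱ) :
    dot (∑ y, v y) p = ∑ y, dot (v y) p := by
  unfold dot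
  rw [Finset.sum_comm]
  refine Finset.sum_congr rfl fun i _ => ?_
  have : (∑ y, v y) i = ∑ y, v y i := by
    induction (Finset.univ : Finset (Fin K)) using Finset.induction with
    | empty => rfl
    | insert _ _ h ih => rw [Finset.sum_insert h, Finset.sum_insert h, ← ih]; rfl
  rw [this, Finset.sum_mul]

lemma dot_continuous {ϱ : ℕ} (p : E ϱ) : Continuous fun θ : E ϱ => dot θ p := by
  unfold dot
  exact continuous_finset_sum _ fun i _ =>
    ((continuous_apply i).comp (PiLp.continuous_ofLp 2 fun _ : Fin ϱ => ℝ)).mul continuous_const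

/-- Riesz-type representation: every continuous linear functional on `E ϱ` is `dot v ·`. -/
lemma exists_dot_rep {ϱ : ℕ} (A : E ϱ →L[ℝ] ℝ) : ∃ v : E ϱ, ∀ p, A p = dot v p := by
  refine ⟨(InnerProductSpace.toDual ℝ (E ϱ)).symm A, fun p => ?_⟩
  have h := InnerProductSpace.toDual_symm_apply (𝕜 := ℝ) (E := E ϱ) (x := p) (y := A)
  rw [← h]
  rw [PiLp.inner_apply]
  unfold dot
  exact Finset.sum_congr rfl fun i _ => by simp [RCLike.inner_apply, mul_comm]

/-! ### conj basic lemmas -/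

lemma le_conj {ϱ : ℕ} (f : E ϱ → EReal) (θ p : E ϱ) (hp : f p ≠ ⊤) :
    ((dot θ p : ℝ) : EReal) - f p ≤ conj f θ := by
  exact le_iSup₂ (f := fun p (_ : f p ≠ ⊤) => ((dot θ p : ℝ) : EReal) - f p) p hp

lemma conj_le {ϱ : ℕ} (f : E ϱ → EReal) (θ : E ϱ) (y : EReal)
    (h : ∀ p, f p ≠ ⊤ → ((dot θ p : ℝ) : EReal) - f p ≤ y) : conj f θ ≤ y :=
  iSup₂_le h

lemma conj_ne_bot {ϱ : ℕ} (f : E ϱ → EReal) (θ : E ϱ) (p : E ϱ)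
    (hp : f p ≠ ⊤) (hp' : f p ≠ ⊥) : conj f θ ≠ ⊥ := by
  intro h
  have := le_conj f θ p hp
  rw [h, le_bot_iff] at this
  rw [← EReal.coe_toReal hp hp', ← EReal.coe_sub] at this
  exact EReal.coe_ne_bot _ this

/-! ### closedness of epigraph-like sets -/

lemma isClosed_le_coe {α : Type*} [TopologicalSpace α] (f : α → EReal) (g : α → ℝ)
    (hf : LowerSemicontinuous f) (hg : Continuous g) :
    IsClosed {x | f x ≤ (g x : EReal)} := by
  rw [← isOpen_compl_iff]
  have : {x | f x ≤ (g x : EReal)}ᶜ =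
      ⋃ q : ℚ, ({x | ((q : ℝ) : EReal) < f x} ∩ {x | g x < (q : ℝ)}) := by
    ext x
    simp only [Set.mem_compl_iff, Set.mem_setOf_eq, not_le, Set.mem_iUnion, Set.mem_inter_iff]
    constructor
    · intro hx
      obtain ⟨c, hc1, hc2⟩ := exists_between hx
      have hcbot : c ≠ ⊥ := fun h => by rw [h] at hc1; exact not_lt_bot hc1
      have hctop : c ≠ ⊤ := fun h => by rw [h] at hc2; exact not_top_lt hc2
      have hgc : g x < c.toReal := by
        have h' := hc1
        rw [← EReal.coe_toReal hctop hcbot] at h'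
        exact EReal.coe_lt_coe_iff.mp h'
      obtain ⟨q, hq1, hq2⟩ := exists_rat_btwn hgc
      refine ⟨q, ?_, hq1⟩
      calc ((q : ℝ) : EReal) < (c.toReal : EReal) := EReal.coe_lt_coe_iff.mpr hq2
        _ = c := EReal.coe_toReal hctop hcbot
        _ < f x := hc2
    · rintro ⟨q, h1, h2⟩
      exact lt_trans (EReal.coe_lt_coe_iff.mpr h2) h1
  rw [this]
  exact isOpen_iUnion fun q =>
    (hf.isOpen_preimage _).inter (isOpen_lt hg continuous_const)

/-! ### the epigraph -/

def epi {ϱ : ℕ} (f : E ϱ → EReal) : Set (E ϱ × ℝ) := {z | f z.1 ≤ (z.2 : EReal)}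

lemma epi_convex {ϱ : ℕ} (f : E ϱ → EReal) (hconv : ErealConvex f) : Convex ℝ (epi f) := by
  rintro ⟨p, ta⟩ hpa ⟨q, tb⟩ hqb a b ha hb hab
  simp only [epi, Set.mem_setOf_eq] at hpa hqb ⊢
  have key : f (a • p + b • q) ≤ (a : EReal) * f p + (b : EReal) * f q := hconv p q a b ha hb hab
  have h1 : (a : EReal) * f p ≤ ((a * ta : ℝ) : EReal) := by
    rcases eq_or_lt_of_le ha with h | h
    · rw [← h]; simp [EReal.zero_mul]
    · calc (a : EReal) * f p ≤ (a : EReal) * ((ta : ℝ) : EReal) := by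
            apply mul_le_mul_of_nonneg_left hpa
            exact le_of_lt (EReal.coe_lt_coe_iff.mpr h)
        _ = ((a * ta : ℝ) : EReal) := by rw [EReal.coe_mul]
  have h2 : (b : EReal) * f q ≤ ((b * tb : ℝ) : EReal) := by
    rcases eq_or_lt_of_le hb with h | h
    · rw [← h]; simp [EReal.zero_mul]
    · calc (b : EReal) * f q ≤ (b : EReal) * ((tb : ℝ) : EReal) := by
            apply mul_le_mul_of_nonneg_left hqb
            exact le_of_lt (EReal.coe_lt_coe_iff.mpr h)
        _ = ((b * tb : ℝ) : EReal) := by rw [EReal.coe_mul]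
  calc f ((a • (p, ta) + b • (q, tb)).1) = f (a • p + b • q) := rfl
    _ ≤ (a : EReal) * f p + (b : EReal) * f q := key
    _ ≤ ((a * ta : ℝ) : EReal) + ((b * tb : ℝ) : EReal) := add_le_add h1 h2
    _ = (((a • (p, ta) + b • (q, tb)).2 : ℝ) : EReal) := by rw [← EReal.coe_add]; rfl

/-! ### Hahn-Banach separation step -/

lemma separation_step {ϱ : ℕ} (f : E ϱ → EReal) (hconv : ErealConvex f)
    (hepi : IsClosed (epi f)) (p1 : E ϱ) (hp1 : f p1 ≠ ⊤)
    (x : E ϱ) (r : ℝ) (hr : ((r : ℝ) : EReal) < f x) :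
    ∃ (A : E ϱ →L[ℝ] ℝ) (s u : ℝ), 0 ≤ s ∧ A x + s * r < u ∧
      ∀ p t, f p ≤ ((t : ℝ) : EReal) → u < A p + s * t := by
  have hxr : (x, r) ∉ epi f := by
    simp only [epi, Set.mem_setOf_eq]
    exact not_le_of_gt hr
  obtain ⟨F, u, hFx, hFS⟩ :=
    geometric_hahn_banach_point_closed (epi_convex f hconv) hepi hxr
  set A : E ϱ →L[ℝ] ℝ := F.comp (ContinuousLinearMap.inl ℝ (E ϱ) ℝ) with hA
  set s : ℝ := F (0, 1) with hs
  have hdecomp : ∀ (p : E ϱ) (t : ℝ), F (p, t) = A p + s * t := by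
    intro p t
    have h1 : (p, t) = (p, (0 : ℝ)) + t • ((0 : E ϱ), (1 : ℝ)) := by
      simp [Prod.ext_iff]
    rw [h1, map_add, map_smul]
    simp only [hA, hs, ContinuousLinearMap.comp_apply, ContinuousLinearMap.inl_apply,
      smul_eq_mul]
    ring
  have hmem : ∀ p t, f p ≤ ((t : ℝ) : EReal) → u < A p + s * t := by
    intro p t hpt
    have : (p, t) ∈ epi f := hpt
    have := hFS _ this
    rwa [hdecomp] at this
  have hp1t : ∀ t : ℝ, (f p1).toReal ≤ t → f p1 ≤ ((t : ℝ) : EReal) := by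
    intro t ht
    rcases eq_or_ne (f p1) ⊥ with h | h
    · rw [h]; exact bot_le
    · calc f p1 = ((f p1).toReal : EReal) := (EReal.coe_toReal hp1 h).symm
        _ ≤ (t : EReal) := EReal.coe_le_coe_iff.mpr ht
  have hsnn : 0 ≤ s := by
    by_contra hneg
    push_neg at hneg
    set t0 : ℝ := max ((f p1).toReal) ((u - A p1) / s) with ht0
    have h1 : u < A p1 + s * t0 := hmem p1 t0 (hp1t t0 (le_max_left _ _))
    have h2 : t0 ≥ (u - A p1) / s := le_max_right _ _
    have h3 : s * t0 ≤ u - A p1 := by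
      have := mul_le_mul_of_nonpos_left h2 (le_of_lt hneg)
      calc s * t0 ≤ s * ((u - A p1) / s) := this
        _ = u - A p1 := by
            rw [mul_comm, div_mul_cancel₀ _ (ne_of_lt hneg)]
    linarith
  refine ⟨A, s, u, hsnn, ?_, hmem⟩
  have := hFx
  rwa [hdecomp] at this

/-! ### converting real bounds to EReal bounds -/

lemma real_to_ereal_bound {ϱ : ℕ} (f : E ϱ → EReal) (hbot : ∀ p, f p ≠ ⊥)
    (v : E ϱ) (M : ℝ)
    (h : ∀ p, f p ≠ ⊤ → dot v p - (f p).toReal ≤ M) :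
    ∀ p, ((dot v p : ℝ) : EReal) - f p ≤ ((M : ℝ) : EReal) := by
  intro p
  rcases eq_or_ne (f p) ⊤ with htop | htop
  · rw [htop, EReal.sub_top]; exact bot_le
  · calc ((dot v p : ℝ) : EReal) - f p
        = ((dot v p : ℝ) : EReal) - (((f p).toReal : ℝ) : EReal) := by
          rw [EReal.coe_toReal htop (hbot p)]
      _ = ((dot v p - (f p).toReal : ℝ) : EReal) := by rw [EReal.coe_sub]
      _ ≤ ((M : ℝ) : EReal) := EReal.coe_le_coe_iff.mpr (h p htop)

/-- From a separating functional with positive vertical slope, produce an affine minorant. -/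
lemma slope_bound {ϱ : ℕ} (f : E ϱ → EReal) (A : E ϱ →L[ℝ] ℝ) (s u : ℝ) (hs : 0 < s)
    (hS : ∀ p t, f p ≤ ((t : ℝ) : EReal) → u < A p + s * t) :
    ∃ v : E ϱ, (∀ p, dot v p = -(A p) / s) ∧
      (∀ p, f p ≠ ⊤ → dot v p - (f p).toReal ≤ -u / s) := by
  obtain ⟨v, hv⟩ := exists_dot_rep ((-(1 / s)) • A)
  refine ⟨v, fun p => ?_, fun p hp => ?_⟩
  · rw [← hv p, ContinuousLinearMap.smul_apply, smul_eq_mul]; ring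
  · have hdvp : dot v p = -(A p) / s := by
      rw [← hv p, ContinuousLinearMap.smul_apply, smul_eq_mul]; ring
    have hfp : f p ≤ (((f p).toReal : ℝ) : EReal) := by
      rcases eq_or_ne (f p) ⊥ with h | h
      · rw [h]; exact bot_le
      · rw [EReal.coe_toReal hp h]
    have h5 := hS p ((f p).toReal) hfp
    have h4 : (u - A p) / s < (f p).toReal := (div_lt_iff₀ hs).mpr (by linarith)
    have key : -A p / s - (u - A p) / s = -u / s := by
      field_simp
      ring
    rw [hdvp]
    linarith

/-! ### Fenchel–Moreau hard direction -/

lemma fenchel_moreau {ϱ : ℕ} (f : E ϱ → EReal) (hbot : ∀ p, f p ≠ ⊥)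
    (hconv : ErealConvex f) (hepi : IsClosed (epi f))
    (p1 : E ϱ) (hp1 : f p1 ≠ ⊤)
    (x : E ϱ) (r : ℝ) (hr : ((r : ℝ) : EReal) < f x) :
    ∃ v : E ϱ, ∀ p, ((dot v p : ℝ) : EReal) - f p ≤ ((dot v x - r : ℝ) : EReal) := by
  obtain ⟨A, s, u, hsnn, hxru, hS⟩ := separation_step f hconv hepi p1 hp1 x r hr
  rcases eq_or_lt_of_le hsnn with hs0 | hspos
  · -- vertical separation: need an auxiliary affine minorant
    rw [← hs0] at hxru hS
    simp only [zero_mul, add_zero] at hxru hS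
    have hdom : ∀ p, f p ≠ ⊤ → u < A p := by
      intro p hp
      refine hS p ((f p).toReal) ?_
      rcases eq_or_ne (f p) ⊥ with h | h
      · rw [h]; exact bot_le
      · rw [EReal.coe_toReal hp h]
    -- second separation at (p1, f p1 - 1)
    have hfp1real : f p1 = (((f p1).toReal : ℝ) : EReal) := (EReal.coe_toReal hp1 (hbot p1)).symm
    have hr1 : (((f p1).toReal - 1 : ℝ) : EReal) < f p1 := by
      have h' := EReal.coe_lt_coe_iff.mpr
        (show (f p1).toReal - 1 < (f p1).toReal by linarith)
      rwa [EReal.coe_toReal hp1 (hbot p1)] at h'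
    obtain ⟨A1, s1, u1, hs1nn, hx1, hS1⟩ :=
      separation_step f hconv hepi p1 hp1 p1 ((f p1).toReal - 1) hr1
    have hs1pos : 0 < s1 := by
      have h1 : u1 < A1 p1 + s1 * (f p1).toReal := hS1 p1 _ (le_of_eq hfp1real)
      have hexp : s1 * ((f p1).toReal - 1) = s1 * (f p1).toReal - s1 := by ring
      linarith
    obtain ⟨v1, hv1eq, hv1⟩ := slope_bound f A1 s1 u1 hs1pos hS1
    obtain ⟨v0, hv0⟩ := exists_dot_rep A
    have hDpos : 0 < u - A x := by linarith
    set c : ℝ := max 1 ((r - dot v1 x + (-u1 / s1)) / (u - A x)) with hc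
    have hcpos : 0 < c := lt_of_lt_of_le one_pos (le_max_left _ _)
    have hcD : r - dot v1 x + (-u1 / s1) ≤ c * (u - A x) :=
      (div_le_iff₀ hDpos).mp (le_max_right _ _)
    refine ⟨v1 + (-c) • v0, real_to_ereal_bound f hbot _ _ ?_⟩
    intro p hp
    have hdv : ∀ q, dot (v1 + (-c) • v0) q = dot v1 q - c * A q := by
      intro q
      rw [dot_add_left, dot_smul_left, ← hv0 q]; ring
    rw [hdv p, hdv x]
    have h1 : dot v1 p - (f p).toReal ≤ -u1 / s1 := hv1 p hp
    have h2 : u < A p := hdom p hp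
    have h3 : -c * A p ≤ -c * u := by nlinarith
    nlinarith
  · -- nonvertical separation
    obtain ⟨v, hveq, hv⟩ := slope_bound f A s u hspos hS
    refine ⟨v, real_to_ereal_bound f hbot _ _ ?_⟩
    intro p hp
    have h1 := hv p hp
    have h2 : dot v x = -(A x) / s := hveq x
    have h3 : -u / s ≤ dot v x - r := by
      rw [h2]
      rw [div_sub' (ne_of_gt hspos), div_le_div_iff₀ hspos hspos]
      nlinarith
    linarith

/-! ### finite infimum facts -/

section Tfacts

variable {ϱ N : ℕ} (ℓρ : Fin N → E ϱ)

lemma ciInf_le_fin {M : ℕ} (h : Fin M → ℝ) (t : Fin M) : (⨅ t', h t') ≤ h t :=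
  ciInf_le (Finite.bddBelow_range h) t

lemma neg_Tfun_le (p : E ϱ) (t : Fin N) : -Tfun ℓρ p ≤ dot p (ℓρ t) := by
  unfold Tfun
  rw [neg_neg]
  exact ciInf_le_fin _ t

lemma Tfun_exists_argmin (hN : 0 < N) (p : E ϱ) :
    ∃ t0, Tfun ℓρ p = -dot p (ℓρ t0) := by
  haveI : Nonempty (Fin N) := Fin.pos_iff_nonempty.mp hN
  obtain ⟨t0, ht0⟩ := Finite.exists_min (fun t => dot p (ℓρ t))
  refine ⟨t0, ?_⟩
  unfold Tfun
  rw [neg_inj]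
  exact le_antisymm (ciInf_le_fin _ t0) (le_ciInf ht0)

lemma dot_Lrho (p : E ϱ) (π : Fin N → ℝ) :
    dot p (Lrho ℓρ π) = ∑ t, π t * dot p (ℓρ t) := by
  unfold dot Lrho
  simp only [PiLp.toLp_apply]
  rw [Finset.sum_congr rfl fun i (_ : i ∈ Finset.univ) => Finset.mul_sum
    (Finset.univ) (fun t => π t * ℓρ t i) (p i), Finset.sum_comm]
  refine Finset.sum_congr rfl fun t _ => ?_
  rw [Finset.mul_sum]
  exact Finset.sum_congr rfl fun i _ => by ring

lemma dot_Lrho_ge (p : E ϱ) (π : Fin N → ℝ) (hπ : π ∈ stdSimplex ℝ (Fin N)) :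
    -Tfun ℓρ p ≤ dot p (Lrho ℓρ π) := by
  rw [dot_Lrho]
  obtain ⟨hnn, hsum⟩ := hπ
  calc -Tfun ℓρ p = ∑ t, π t * (-Tfun ℓρ p) := by
        rw [← Finset.sum_mul, hsum, one_mul]
    _ ≤ ∑ t, π t * dot p (ℓρ t) :=
        Finset.sum_le_sum fun t _ =>
          mul_le_mul_of_nonneg_left (neg_Tfun_le ℓρ p t) (hnn t)

lemma Tfun_convex (hN : 0 < N) (p q : E ϱ) (a b : ℝ) (ha : 0 ≤ a) (hb : 0 ≤ b) :
    Tfun ℓρ (a • p + b • q) ≤ a * Tfun ℓρ p + b * Tfun ℓρ q := by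
  have h : a * (⨅ t, dot p (ℓρ t)) + b * (⨅ t, dot q (ℓρ t)) ≤
      ⨅ t, dot (a • p + b • q) (ℓρ t) := by
    haveI : Nonempty (Fin N) := Fin.pos_iff_nonempty.mp hN
    refine le_ciInf fun t => ?_
    rw [dot_add_left, dot_smul_left, dot_smul_left]
    have h1 := mul_le_mul_of_nonneg_left (ciInf_le_fin (fun t' => dot p (ℓρ t')) t) ha
    have h2 := mul_le_mul_of_nonneg_left (ciInf_le_fin (fun t' => dot q (ℓρ t')) t) hb
    linarith
  unfold Tfun
  linarith

lemma Tfun_continuous (hN : 0 < N) : Continuous (Tfun ℓρ) := by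
  haveI : Nonempty (Fin N) := Fin.pos_iff_nonempty.mp hN
  have hrepr : ∀ p : E ϱ, Tfun ℓρ p =
      -(Finset.univ.inf' Finset.univ_nonempty fun t => dot p (ℓρ t)) := by
    intro p
    unfold Tfun
    rw [neg_inj]
    obtain ⟨t0, _, ht0⟩ := Finset.exists_mem_eq_inf' (Finset.univ_nonempty) fun t => dot p (ℓρ t)
    rw [ht0]
    refine le_antisymm (ciInf_le_fin _ t0) (le_ciInf fun t => ?_)
    rw [← ht0]
    exact Finset.inf'_le _ (Finset.mem_univ t)
  have hcont : Continuous fun p : E ϱ =>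
      Finset.univ.inf' Finset.univ_nonempty fun t => dot p (ℓρ t) :=
    Continuous.finset_inf'_apply _ fun t _ => dot_continuous (ℓρ t)
  have heq : Tfun ℓρ = fun p => -(Finset.univ.inf' Finset.univ_nonempty
      fun t => dot p (ℓρ t)) := funext hrepr
  rw [heq]
  exact hcont.neg

lemma Lrho_single (t0 : Fin N) :
    Lrho ℓρ (fun t => if t = t0 then (1 : ℝ) else 0) = ℓρ t0 := by
  ext i
  unfold Lrho
  simp

lemma single_mem_simplex (t0 : Fin N) :
    (fun t => if t = t0 then (1 : ℝ) else 0) ∈ stdSimplex ℝ (Fin N) := by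
  constructor
  · intro t; dsimp only; split <;> norm_num
  · simp

lemma Lrho_combo (π1 π2 : Fin N → ℝ) (a b : ℝ) (θ1 θ2 : E ϱ) :
    (a • θ1 + b • θ2) + Lrho ℓρ (a • π1 + b • π2) =
      a • (θ1 + Lrho ℓρ π1) + b • (θ2 + Lrho ℓρ π2) := by
  ext i
  have h : (Lrho ℓρ (a • π1 + b • π2)) i = a * (Lrho ℓρ π1) i + b * (Lrho ℓρ π2) i := by
    unfold Lrho
    simp only [PiLp.toLp_apply]
    rw [Finset.mul_sum, Finset.mul_sum, ← Finset.sum_add_distrib]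
    refine Finset.sum_congr rfl fun t _ => ?_
    have : (a • π1 + b • π2) t = a * π1 t + b * π2 t := rfl
    rw [this]; ring
  have lhs : ((a • θ1 + b • θ2) + Lrho ℓρ (a • π1 + b • π2)) i =
      (a * θ1 i + b * θ2 i) + (Lrho ℓρ (a • π1 + b • π2)) i := rfl
  have rhs : (a • (θ1 + Lrho ℓρ π1) + b • (θ2 + Lrho ℓρ π2)) i =
      a * (θ1 i + (Lrho ℓρ π1) i) + b * (θ2 i + (Lrho ℓρ π2) i) := rfl
  rw [lhs, rhs, h]; ring

end Tfacts

/-! ### real-valued conjugate facts -/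

section CondFacts

variable {ϱ N : ℕ} (Ω : E ϱ → EReal) (ℓρ : Fin N → E ϱ)

lemma starFn_coe (f : E ϱ → EReal) (θ : E ϱ) (h1 : conj f θ ≠ ⊥) (h2 : conj f θ ≠ ⊤) :
    ((starFn f θ : ℝ) : EReal) = conj f θ := EReal.coe_toReal h2 h1

lemma le_starFn (f : E ϱ → EReal) (θ p : E ϱ) (hpb : f p ≠ ⊥) (hp : f p ≠ ⊤)
    (htop : conj f θ ≠ ⊤) : dot θ p - (f p).toReal ≤ starFn f θ := by
  have h := le_conj f θ p hp
  have hne : conj f θ ≠ ⊥ := conj_ne_bot f θ p hp hpb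
  rw [← starFn_coe f θ hne htop] at h
  rw [← EReal.coe_toReal hp hpb, ← EReal.coe_sub] at h
  exact EReal.coe_le_coe_iff.mp h

/-- `Ω + T` is convex. -/
lemma OmegaT_convex (hN : 0 < N) (hbot : ∀ p, Ω p ≠ ⊥) (hconv : ErealConvex Ω) :
    ErealConvex (OmegaT Ω ℓρ) := by
  intro p q a b ha hb hab
  rcases eq_or_lt_of_le ha with ha0 | hapos
  · have hb1 : b = 1 := by linarith
    subst hb1
    rw [← ha0]
    have hcombo : (0 : ℝ) • p + (1 : ℝ) • q = q := by rw [zero_smul, one_smul, zero_add]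
    rw [hcombo]
    rw [show ((0 : ℝ) : EReal) = 0 from rfl, EReal.zero_mul, show ((1:ℝ) : EReal) = 1 from rfl,
      one_mul, zero_add]
  rcases eq_or_lt_of_le hb with hb0 | hbpos
  · have ha1 : a = 1 := by linarith
    subst ha1
    rw [← hb0]
    have hcombo : (1 : ℝ) • p + (0 : ℝ) • q = p := by rw [zero_smul, one_smul, add_zero]
    rw [hcombo]
    rw [show ((0 : ℝ) : EReal) = 0 from rfl, EReal.zero_mul, show ((1:ℝ) : EReal) = 1 from rfl,
      one_mul, add_zero]
  -- now a, b > 0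
  rcases eq_or_ne (Ω p) ⊤ with hp | hp
  · have h1 : (a : EReal) * OmegaT Ω ℓρ p = ⊤ := by
      unfold OmegaT
      rw [hp, EReal.top_add_coe]
      exact EReal.mul_top_of_pos (EReal.coe_pos.mpr hapos)
    have h2 : (b : EReal) * OmegaT Ω ℓρ q ≠ ⊥ := by
      unfold OmegaT
      intro hc
      rcases eq_or_ne (Ω q) ⊤ with hq | hq
      · rw [hq, EReal.top_add_coe, EReal.mul_top_of_pos (EReal.coe_pos.mpr hbpos)] at hc
        exact top_ne_bot hc
      · rw [← EReal.coe_toReal hq (hbot q), ← EReal.coe_add, ← EReal.coe_mul] at hc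
        exact EReal.coe_ne_bot _ hc
    rw [h1, EReal.top_add_of_ne_bot h2]
    exact le_top
  rcases eq_or_ne (Ω q) ⊤ with hq | hq
  · have h1 : (b : EReal) * OmegaT Ω ℓρ q = ⊤ := by
      unfold OmegaT
      rw [hq, EReal.top_add_coe]
      exact EReal.mul_top_of_pos (EReal.coe_pos.mpr hbpos)
    have h2 : (a : EReal) * OmegaT Ω ℓρ p ≠ ⊥ := by
      unfold OmegaT
      intro hc
      rw [← EReal.coe_toReal hp (hbot p), ← EReal.coe_add, ← EReal.coe_mul] at hc
      exact EReal.coe_ne_bot _ hc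
    rw [h1, EReal.add_top_of_ne_bot h2]
    exact le_top
  -- all finite
  have hΩ := hconv p q a b ha hb hab
  have hT := Tfun_convex ℓρ hN p q a b ha hb
  unfold OmegaT
  rw [← EReal.coe_toReal hp (hbot p), ← EReal.coe_toReal hq (hbot q)] at hΩ ⊢
  rw [← EReal.coe_mul, ← EReal.coe_mul] at hΩ
  rw [← EReal.coe_add, ← EReal.coe_add, ← EReal.coe_mul, ← EReal.coe_mul, ← EReal.coe_add]
  calc Ω (a • p + b • q) + ((Tfun ℓρ (a • p + b • q) : ℝ) : EReal)
      ≤ ((a * (Ω p).toReal + b * (Ω q).toReal : ℝ) : EReal)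
          + ((a * Tfun ℓρ p + b * Tfun ℓρ q : ℝ) : EReal) := by
        apply add_le_add hΩ
        exact EReal.coe_le_coe_iff.mpr hT
    _ = ((a * ((Ω p).toReal + Tfun ℓρ p) + b * ((Ω q).toReal + Tfun ℓρ q) : ℝ) : EReal) := by
        rw [← EReal.coe_add]
        norm_cast
        ring

lemma epi_Omega_closed (hlsc : LowerSemicontinuous Ω) : IsClosed (epi Ω) := by
  have : epi Ω = {z : E ϱ × ℝ | Ω z.1 ≤ ((z.2 : ℝ) : EReal)} := rfl
  rw [this]
  exact isClosed_le_coe (fun z : E ϱ × ℝ => Ω z.1) (fun z => z.2)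
    (LowerSemicontinuous.comp (f := Ω) (g := fun z : E ϱ × ℝ => z.1)
      hlsc continuous_fst) continuous_snd

lemma add_coe_le_coe_iff (x : EReal) (a b : ℝ) :
    x + (a : EReal) ≤ (b : EReal) ↔ x ≤ ((b - a : ℝ) : EReal) := by
  induction x with
  | bot => simp [EReal.bot_add]
  | coe y =>
    rw [← EReal.coe_add, EReal.coe_le_coe_iff, EReal.coe_le_coe_iff]
    constructor <;> intro <;> linarith
  | top =>
    rw [EReal.top_add_coe]
    simp only [top_le_iff]
    constructor
    · intro h; exact absurd h (EReal.coe_ne_top b)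
    · intro h; exact absurd h (EReal.coe_ne_top _)

lemma epi_OmegaT_closed (hN : 0 < N) (hlsc : LowerSemicontinuous Ω) :
    IsClosed (epi (OmegaT Ω ℓρ)) := by
  have heq : epi (OmegaT Ω ℓρ) =
      {z : E ϱ × ℝ | Ω z.1 ≤ ((z.2 - Tfun ℓρ z.1 : ℝ) : EReal)} := by
    ext z
    exact add_coe_le_coe_iff (Ω z.1) (Tfun ℓρ z.1) z.2
  rw [heq]
  exact isClosed_le_coe (fun z : E ϱ × ℝ => Ω z.1) (fun z => z.2 - Tfun ℓρ z.1)
    (LowerSemicontinuous.comp (f := Ω) (g := fun z : E ϱ × ℝ => z.1)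
      hlsc continuous_fst)
    (continuous_snd.sub ((Tfun_continuous ℓρ hN).comp continuous_fst))

lemma coe_lsc {α : Type*} [TopologicalSpace α] (g : α → ℝ) (hg : Continuous g) :
    LowerSemicontinuous fun x => ((g x : ℝ) : EReal) := by
  rw [lowerSemicontinuous_iff_isOpen_preimage]
  intro y
  induction y with
  | bot =>
    have : (fun x => ((g x : ℝ) : EReal)) ⁻¹' Set.Ioi ⊥ = Set.univ := by
      ext x; simp [Set.mem_preimage, EReal.bot_lt_coe]
    rw [this]; exact isOpen_univ
  | coe c =>
    have : (fun x => ((g x : ℝ) : EReal)) ⁻¹' Set.Ioi (c : EReal) = {x | c < g x} := by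
      ext x; simp [Set.mem_preimage, EReal.coe_lt_coe_iff]
    rw [this]; exact isOpen_lt continuous_const hg
  | top =>
    have : (fun x => ((g x : ℝ) : EReal)) ⁻¹' Set.Ioi ⊤ = ∅ := by
      ext x; simp
    rw [this]; exact isOpen_empty

end CondFacts

/-! ### the marginal function g and the key duality identities -/

section Gfacts

variable {ϱ N : ℕ} (Ω : E ϱ → EReal) (ℓρ : Fin N → E ϱ)

def grF (Ω : E ϱ → EReal) (ℓρ : Fin N → E ϱ) (θ : E ϱ) : ℝ :=
  ⨅ π : {π : Fin N → ℝ // π ∈ stdSimplex ℝ (Fin N)}, starFn Ω (θ + Lrho ℓρ π.1)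

variable (hN : 0 < N) (hbot : ∀ p, Ω p ≠ ⊥) (p1 : E ϱ) (hp1 : Ω p1 ≠ ⊤)
  (hconjtop : ∀ θ, conj Ω θ ≠ ⊤)

section
include hN hbot hp1 hconjtop

lemma starFn_lb (u : E ϱ) : dot u p1 - (Ω p1).toReal ≤ starFn Ω u :=
  le_starFn Ω u p1 (hbot p1) hp1 (hconjtop u)

lemma grF_bddBelow (θ : E ϱ) :
    BddBelow (Set.range fun π : {π : Fin N → ℝ // π ∈ stdSimplex ℝ (Fin N)} =>
      starFn Ω (θ + Lrho ℓρ π.1)) := by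
  refine ⟨dot θ p1 - (Ω p1).toReal - Tfun ℓρ p1, ?_⟩
  rintro x ⟨π, rfl⟩
  have h1 := starFn_lb Ω hN hbot p1 hp1 hconjtop (θ + Lrho ℓρ π.1)
  have h2 : -Tfun ℓρ p1 ≤ dot p1 (Lrho ℓρ π.1) := dot_Lrho_ge ℓρ p1 π.1 π.2
  rw [dot_add_left] at h1
  rw [dot_comm] at h2
  linarith

lemma grF_le (θ : E ϱ) (π : Fin N → ℝ) (hπ : π ∈ stdSimplex ℝ (Fin N)) :
    grF Ω ℓρ θ ≤ starFn Ω (θ + Lrho ℓρ π) :=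
  ciInf_le (grF_bddBelow Ω ℓρ hN hbot p1 hp1 hconjtop θ) ⟨π, hπ⟩

lemma grF_exists_lt (θ : E ϱ) (ε : ℝ) (hε : 0 < ε) :
    ∃ π ∈ stdSimplex ℝ (Fin N), starFn Ω (θ + Lrho ℓρ π) < grF Ω ℓρ θ + ε := by
  haveI : Nonempty {π : Fin N → ℝ // π ∈ stdSimplex ℝ (Fin N)} :=
    ⟨⟨_, single_mem_simplex ⟨0, hN⟩⟩⟩
  have h : grF Ω ℓρ θ < grF Ω ℓρ θ + ε := by linarith
  obtain ⟨π, hπ⟩ := exists_lt_of_ciInf_lt h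
  exact ⟨π.1, π.2, hπ⟩

lemma starFn_convex_comb (u v : E ϱ) (a b : ℝ) (ha : 0 ≤ a) (hb : 0 ≤ b) (hab : a + b = 1) :
    starFn Ω (a • u + b • v) ≤ a * starFn Ω u + b * starFn Ω v := by
  have hconj : conj Ω (a • u + b • v) ≤ ((a * starFn Ω u + b * starFn Ω v : ℝ) : EReal) := by
    apply conj_le
    intro p hp
    rw [← EReal.coe_toReal hp (hbot p), ← EReal.coe_sub, EReal.coe_le_coe_iff]
    rw [dot_add_left, dot_smul_left, dot_smul_left]
    have h1 := mul_le_mul_of_nonneg_left (le_starFn Ω u p (hbot p) hp (hconjtop u)) ha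
    have h2 := mul_le_mul_of_nonneg_left (le_starFn Ω v p (hbot p) hp (hconjtop v)) hb
    have h3 : a * (Ω p).toReal + b * (Ω p).toReal = (Ω p).toReal := by
      rw [← add_mul, hab, one_mul]
    nlinarith [h1, h2, h3]
  have hne : conj Ω (a • u + b • v) ≠ ⊥ := conj_ne_bot Ω _ p1 hp1 (hbot p1)
  have := EReal.toReal_le_toReal hconj hne (EReal.coe_ne_top _)
  rwa [EReal.toReal_coe] at this

lemma grF_convex_comb (θ1 θ2 : E ϱ) (a b : ℝ) (ha : 0 ≤ a) (hb : 0 ≤ b) (hab : a + b = 1) :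
    grF Ω ℓρ (a • θ1 + b • θ2) ≤ a * grF Ω ℓρ θ1 + b * grF Ω ℓρ θ2 := by
  apply le_of_forall_pos_le_add
  intro ε hε
  obtain ⟨π1, hπ1, h1⟩ := grF_exists_lt Ω ℓρ hN hbot p1 hp1 hconjtop θ1 ε hε
  obtain ⟨π2, hπ2, h2⟩ := grF_exists_lt Ω ℓρ hN hbot p1 hp1 hconjtop θ2 ε hε
  have hmem : a • π1 + b • π2 ∈ stdSimplex ℝ (Fin N) :=
    convex_stdSimplex ℝ (Fin N) hπ1 hπ2 ha hb hab
  have step1 := grF_le Ω ℓρ hN hbot p1 hp1 hconjtop (a • θ1 + b • θ2) _ hmem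
  rw [Lrho_combo ℓρ π1 π2 a b θ1 θ2] at step1
  have step2 := starFn_convex_comb Ω hN hbot p1 hp1 hconjtop
    (θ1 + Lrho ℓρ π1) (θ2 + Lrho ℓρ π2) a b ha hb hab
  have h3 := mul_le_mul_of_nonneg_left (le_of_lt h1) ha
  have h4 := mul_le_mul_of_nonneg_left (le_of_lt h2) hb
  nlinarith [hab]

lemma grF_continuous : Continuous (grF Ω ℓρ) := by
  have hcvx : ConvexOn ℝ Set.univ (grF Ω ℓρ) := by
    refine ⟨convex_univ, fun x _ y _ a b ha hb hab => ?_⟩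
    exact grF_convex_comb Ω ℓρ hN hbot p1 hp1 hconjtop x y a b ha hb hab
  exact continuousOn_univ.mp (hcvx.continuousOn isOpen_univ)

end

/-- key identity: the conjugate of `g` is `Ω_T`. -/
lemma conj_gE_eq (hN : 0 < N) (hbot : ∀ p, Ω p ≠ ⊥) (hconv : ErealConvex Ω)
    (hlsc : LowerSemicontinuous Ω) (p1 : E ϱ) (hp1 : Ω p1 ≠ ⊤)
    (hconjtop : ∀ θ, conj Ω θ ≠ ⊤) (p : E ϱ) :
    conj (fun θ => ((grF Ω ℓρ θ : ℝ) : EReal)) p = OmegaT Ω ℓρ p := by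
  apply le_antisymm
  · -- the easy direction
    apply conj_le
    intro θ' _
    rcases eq_or_ne (Ω p) ⊤ with hp | hp
    · unfold OmegaT
      rw [hp, EReal.top_add_coe]
      exact le_top
    · have hreal : dot p θ' - grF Ω ℓρ θ' ≤ (Ω p).toReal + Tfun ℓρ p := by
        apply le_of_forall_pos_le_add
        intro ε hε
        obtain ⟨π0, hπ0, h0⟩ := grF_exists_lt Ω ℓρ hN hbot p1 hp1 hconjtop θ' ε hε
        have h1 : dot (θ' + Lrho ℓρ π0) p - (Ω p).toReal ≤ starFn Ω (θ' + Lrho ℓρ π0) :=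
          le_starFn Ω _ p (hbot p) hp (hconjtop _)
        have h2 : -Tfun ℓρ p ≤ dot p (Lrho ℓρ π0) := dot_Lrho_ge ℓρ p π0 hπ0
        rw [dot_add_left] at h1
        rw [dot_comm] at h2
        have h3 : dot p θ' = dot θ' p := dot_comm p θ'
        linarith
      unfold OmegaT
      rw [← EReal.coe_toReal hp (hbot p), ← EReal.coe_sub, ← EReal.coe_add,
        EReal.coe_le_coe_iff]
      exact hreal
  · -- the hard direction, via Fenchel–Moreau for Ω
    have key : ∀ r : ℝ, ((r : ℝ) : EReal) < OmegaT Ω ℓρ p →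
        ((r : ℝ) : EReal) ≤ conj (fun θ => ((grF Ω ℓρ θ : ℝ) : EReal)) p := by
      intro r hr
      have hΩgt : ((r - Tfun ℓρ p : ℝ) : EReal) < Ω p := by
        rcases eq_or_ne (Ω p) ⊤ with hp | hp
        · rw [hp]; exact EReal.coe_lt_top _
        · unfold OmegaT at hr
          rw [← EReal.coe_toReal hp (hbot p), ← EReal.coe_add, EReal.coe_lt_coe_iff] at hr
          rw [← EReal.coe_toReal hp (hbot p), EReal.coe_lt_coe_iff]
          linarith
      obtain ⟨u, hu⟩ := fenchel_moreau Ω hbot hconv (epi_Omega_closed Ω hlsc) p1 hp1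
        p (r - Tfun ℓρ p) hΩgt
      have hconju : conj Ω u ≤ ((dot u p - (r - Tfun ℓρ p) : ℝ) : EReal) :=
        conj_le _ _ _ fun q hq => hu q
      have hstaru : starFn Ω u ≤ dot u p - (r - Tfun ℓρ p) := by
        have := EReal.toReal_le_toReal hconju (conj_ne_bot Ω u p1 hp1 (hbot p1))
          (EReal.coe_ne_top _)
        rwa [EReal.toReal_coe] at this
      obtain ⟨t0, ht0⟩ := Tfun_exists_argmin ℓρ hN p
      set θ' : E ϱ := u - ℓρ t0 with hθ'
      have hθu : θ' + ℓρ t0 = u := sub_add_cancel u (ℓρ t0)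
      have hgr : grF Ω ℓρ θ' ≤ starFn Ω u := by
        have := grF_le Ω ℓρ hN hbot p1 hp1 hconjtop θ'
          (fun t => if t = t0 then (1 : ℝ) else 0) (single_mem_simplex t0)
        rwa [Lrho_single, hθu] at this
      have hterm : ((r : ℝ) : EReal) ≤ ((dot p θ' : ℝ) : EReal) - ((grF Ω ℓρ θ' : ℝ) : EReal) := by
        rw [← EReal.coe_sub, EReal.coe_le_coe_iff]
        have hd : dot p θ' = dot u p - dot p (ℓρ t0) := by
          rw [dot_comm, hθ', dot_sub_left, dot_comm (ℓρ t0) p]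
        have hT : dot p (ℓρ t0) = -Tfun ℓρ p := by rw [ht0]; ring
        rw [hd, hT]
        linarith
      calc ((r : ℝ) : EReal) ≤ ((dot p θ' : ℝ) : EReal) - ((grF Ω ℓρ θ' : ℝ) : EReal) := hterm
        _ ≤ conj (fun θ => ((grF Ω ℓρ θ : ℝ) : EReal)) p :=
            le_conj (fun θ => ((grF Ω ℓρ θ : ℝ) : EReal)) p θ' (EReal.coe_ne_top _)
    -- conclude by approximation from below
    rcases eq_or_ne (OmegaT Ω ℓρ p) ⊥ with hb | hb
    · rw [hb]; exact bot_le
    · by_contra hcon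
      push_neg at hcon
      obtain ⟨c, hc1, hc2⟩ := exists_between hcon
      have hcbot : c ≠ ⊥ := fun h => by rw [h] at hc1; exact not_lt_bot hc1
      have hctop : c ≠ ⊤ := fun h => by
        rw [h] at hc2
        exact not_top_lt (lt_of_lt_of_le hc2 le_top)
      have := key c.toReal (by rw [EReal.coe_toReal hctop hcbot]; exact hc2)
      rw [EReal.coe_toReal hctop hcbot] at this
      exact absurd (lt_of_le_of_lt this hc1) (lt_irrefl _)

lemma conj_OmegaT_ne_top (hN : 0 < N) (hbot : ∀ p, Ω p ≠ ⊥)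
    (hconjtop : ∀ θ, conj Ω θ ≠ ⊤) (θ : E ϱ) : conj (OmegaT Ω ℓρ) θ ≠ ⊤ := by
  set t0 : Fin N := ⟨0, hN⟩
  have hle : conj (OmegaT Ω ℓρ) θ ≤ conj Ω (θ + ℓρ t0) := by
    apply conj_le
    intro p hp
    have hΩp : Ω p ≠ ⊤ := by
      intro h
      apply hp
      unfold OmegaT
      rw [h, EReal.top_add_coe]
    obtain ⟨w, hw⟩ : ∃ w : ℝ, Ω p = (w : EReal) :=
      ⟨_, (EReal.coe_toReal hΩp (hbot p)).symm⟩
    have h2 : -Tfun ℓρ p ≤ dot p (ℓρ t0) := neg_Tfun_le ℓρ p t0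
    calc ((dot θ p : ℝ) : EReal) - OmegaT Ω ℓρ p
        = ((dot θ p - w - Tfun ℓρ p : ℝ) : EReal) := by
          unfold OmegaT
          rw [hw, ← EReal.coe_add, ← EReal.coe_sub]
          norm_cast
          ring
      _ ≤ ((dot (θ + ℓρ t0) p - w : ℝ) : EReal) := by
          rw [EReal.coe_le_coe_iff, dot_add_left, dot_comm (ℓρ t0) p]
          linarith
      _ = ((dot (θ + ℓρ t0) p : ℝ) : EReal) - Ω p := by
          rw [hw, ← EReal.coe_sub]
      _ ≤ conj Ω (θ + ℓρ t0) := le_conj Ω _ p hΩp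
  intro h
  rw [h, top_le_iff] at hle
  exact hconjtop _ hle

lemma OmegaT_ne_top_iff (p : E ϱ) : OmegaT Ω ℓρ p ≠ ⊤ ↔ Ω p ≠ ⊤ := by
  unfold OmegaT
  constructor
  · intro h hc; apply h; rw [hc, EReal.top_add_coe]
  · intro h hc
    apply h
    rcases eq_or_ne (Ω p) ⊥ with hb | hb
    · rw [hb, EReal.bot_add] at hc; exact absurd hc (by simp)
    · rw [← EReal.coe_toReal h hb, ← EReal.coe_add] at hc
      exact absurd hc (EReal.coe_ne_top _)

lemma OmegaT_ne_bot (hbot : ∀ p, Ω p ≠ ⊥) (p : E ϱ) : OmegaT Ω ℓρ p ≠ ⊥ := by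
  unfold OmegaT
  intro hc
  rcases eq_or_ne (Ω p) ⊤ with h | h
  · rw [h, EReal.top_add_coe] at hc; exact absurd hc (by simp)
  · rw [← EReal.coe_toReal h (hbot p), ← EReal.coe_add] at hc
    exact EReal.coe_ne_bot _ hc

lemma conj_OmegaT_ne_bot (hbot : ∀ p, Ω p ≠ ⊥) (p1 : E ϱ) (hp1 : Ω p1 ≠ ⊤) (θ : E ϱ) :
    conj (OmegaT Ω ℓρ) θ ≠ ⊥ :=
  conj_ne_bot _ θ p1 ((OmegaT_ne_top_iff Ω ℓρ p1).mpr hp1) (OmegaT_ne_bot Ω ℓρ hbot p1)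

/-- The key inequality `Ω_T^*(θ) ≥ g(θ)`, via Fenchel–Moreau for `g`. -/
lemma grF_le_starFn_OmegaT (hN : 0 < N) (hbot : ∀ p, Ω p ≠ ⊥) (hconv : ErealConvex Ω)
    (hlsc : LowerSemicontinuous Ω) (p1 : E ϱ) (hp1 : Ω p1 ≠ ⊤)
    (hconjtop : ∀ θ, conj Ω θ ≠ ⊤) (θ : E ϱ) :
    grF Ω ℓρ θ ≤ starFn (OmegaT Ω ℓρ) θ := by
  set gE : E ϱ → EReal := fun θ' => ((grF Ω ℓρ θ' : ℝ) : EReal) with hgE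
  have hgEbot : ∀ q, gE q ≠ ⊥ := fun q => EReal.coe_ne_bot _
  have hgEconv : ErealConvex gE := by
    intro p q a b ha hb hab
    have := grF_convex_comb Ω ℓρ hN hbot p1 hp1 hconjtop p q a b ha hb hab
    calc gE (a • p + b • q) ≤ ((a * grF Ω ℓρ p + b * grF Ω ℓρ q : ℝ) : EReal) :=
          EReal.coe_le_coe_iff.mpr this
      _ = (a : EReal) * gE p + (b : EReal) * gE q := by
          rw [← EReal.coe_mul, ← EReal.coe_mul, ← EReal.coe_add]
  have hgEepi : IsClosed (epi gE) := by
    have : epi gE = {z : E ϱ × ℝ | ((grF Ω ℓρ z.1 : ℝ) : EReal) ≤ ((z.2 : ℝ) : EReal)} := rfl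
    rw [this]
    exact isClosed_le_coe _ _
      (coe_lsc _ ((grF_continuous Ω ℓρ hN hbot p1 hp1 hconjtop).comp continuous_fst))
      continuous_snd
  -- reduce to a real inequality approximated from below
  have key : ∀ r : ℝ, r < grF Ω ℓρ θ → r ≤ starFn (OmegaT Ω ℓρ) θ := by
    intro r hr
    obtain ⟨v, hv⟩ := fenchel_moreau gE hgEbot hgEconv hgEepi 0 (EReal.coe_ne_top _)
      θ r (EReal.coe_lt_coe_iff.mpr hr)
    have hconjgE : conj gE v ≤ ((dot v θ - r : ℝ) : EReal) := conj_le _ _ _ fun q _ => hv q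
    have hOTv : OmegaT Ω ℓρ v = conj gE v :=
      (conj_gE_eq Ω ℓρ hN hbot hconv hlsc p1 hp1 hconjtop v).symm
    have hvne : OmegaT Ω ℓρ v ≠ ⊤ := by
      rw [hOTv]
      intro h
      rw [h, top_le_iff] at hconjgE
      exact absurd hconjgE (EReal.coe_ne_top _)
    have hterm : ((r : ℝ) : EReal) ≤ ((dot θ v : ℝ) : EReal) - OmegaT Ω ℓρ v := by
      calc ((r : ℝ) : EReal) = ((dot θ v : ℝ) : EReal) - ((dot v θ - r : ℝ) : EReal) := by
            rw [← EReal.coe_sub, EReal.coe_eq_coe_iff, dot_comm]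
            ring
        _ ≤ ((dot θ v : ℝ) : EReal) - conj gE v := EReal.sub_le_sub (le_refl _) hconjgE
        _ = ((dot θ v : ℝ) : EReal) - OmegaT Ω ℓρ v := by rw [hOTv]
    have hfinal : ((r : ℝ) : EReal) ≤ conj (OmegaT Ω ℓρ) θ :=
      le_trans hterm (le_conj _ θ v hvne)
    have := EReal.toReal_le_toReal hfinal (EReal.coe_ne_bot _)
      (conj_OmegaT_ne_top Ω ℓρ hN hbot hconjtop θ)
    rwa [EReal.toReal_coe] at this
  by_contra hcon
  push_neg at hcon
  have := key ((starFn (OmegaT Ω ℓρ) θ + grF Ω ℓρ θ) / 2) (by linarith)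
  linarith

end Gfacts


/-- Linear surrogate regret bound: under Condition 1, any `π`-argmax link `φ` satisfies
`Regret_ℓ(φ(θ), η) ≤ N · Regret_{L_{Ω_T}}(θ, η)` for all `θ` and `η ∈ Δ^K`. -/
theorem linear_surrogate_regret_bound
    {K N ϱ : ℕ} (hK : 0 < K) (hN : 0 < N) (hϱ : 0 < ϱ)
    (Ω : E ϱ → EReal) (ρ : Fin K → E ϱ) (ℓρ : Fin N → E ϱ)
    (ℓ : Fin N → Fin K → ℝ) (c : Fin K → ℝ)
    (hdec : ∀ t y, ℓ t y = dot (ρ y) (ℓρ t) + c y)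
    (hcond : Condition1 Ω ρ)
    (πsel : E ϱ → Fin N → ℝ) (hsel : ∀ θ, πsel θ ∈ Pii Ω ℓρ θ)
    (φ : E ϱ → Fin N) (hφ : ∀ θ, ∀ t, πsel θ t ≤ πsel θ (φ θ)) :
    ∀ θ : E ϱ, ∀ η ∈ stdSimplex ℝ (Fin K),
      RegTar ℓ (φ θ) η ≤ (N : ℝ) * RegSur Ω ρ ℓρ θ η := by
  obtain ⟨hbot, ⟨p1, hp1⟩, hconv, hlsc, hhull, hconjtop⟩ := hcond
  intro θ η hη
  obtain ⟨hηnn, hηsum⟩ := hη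
  haveI : Nonempty (Fin N) := Fin.pos_iff_nonempty.mp hN
  set ρbar : E ϱ := ∑ y, η y • ρ y with hρbar
  have hρbarmem : ρbar ∈ convexHull ℝ (Set.range ρ) := by
    apply Convex.sum_mem (convex_convexHull ℝ _) (fun y _ => hηnn y) hηsum
    intro y _
    exact subset_convexHull ℝ _ ⟨y, rfl⟩
  have hΩρtop : Ω ρbar ≠ ⊤ := hhull hρbarmem
  have hOTρtop : OmegaT Ω ℓρ ρbar ≠ ⊤ := (OmegaT_ne_top_iff Ω ℓρ ρbar).mpr hΩρtop
  have hOTρbot : OmegaT Ω ℓρ ρbar ≠ ⊥ := OmegaT_ne_bot Ω ℓρ hbot ρbar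
  have hdotbar : ∀ x : E ϱ, dot ρbar x = ∑ y, η y * dot (ρ y) x := by
    intro x
    rw [hρbar, dot_sum_left]
    exact Finset.sum_congr rfl fun y _ => dot_smul_left _ _ _
  -- ### target side
  set cbar : ℝ := ∑ y, η y * c y with hcbar
  have hRt : ∀ t, (∑ y, η y * ℓ t y) = dot ρbar (ℓρ t) + cbar := by
    intro t
    rw [hdotbar (ℓρ t), hcbar, ← Finset.sum_add_distrib]
    exact Finset.sum_congr rfl fun y _ => by rw [hdec t y]; ring
  obtain ⟨t0, ht0⟩ := Tfun_exists_argmin ℓρ hN ρbar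
  have hInf : (⨅ t' : Fin N, ∑ y, η y * ℓ t' y) = -Tfun ℓρ ρbar + cbar := by
    simp only [hRt]
    apply le_antisymm
    · calc (⨅ t', dot ρbar (ℓρ t') + cbar) ≤ dot ρbar (ℓρ t0) + cbar :=
            ciInf_le_fin _ t0
        _ = -Tfun ℓρ ρbar + cbar := by rw [ht0]; ring
    · apply le_ciInf
      intro t
      have := neg_Tfun_le ℓρ ρbar t
      linarith
  have hRegTar : RegTar ℓ (φ θ) η = dot ρbar (ℓρ (φ θ)) + Tfun ℓρ ρbar := by
    unfold RegTar
    rw [hRt (φ θ), hInf]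
    ring
  -- ### link side
  obtain ⟨hπΔ, hπmin⟩ := hsel θ
  have hπnn : ∀ t, 0 ≤ πsel θ t := hπΔ.1
  have hπsum : ∑ t, πsel θ t = 1 := hπΔ.2
  have hNπ : 1 ≤ (N : ℝ) * πsel θ (φ θ) := by
    calc (1 : ℝ) = ∑ t, πsel θ t := hπsum.symm
      _ ≤ ∑ _t : Fin N, πsel θ (φ θ) := Finset.sum_le_sum fun t _ => hφ θ t
      _ = N * πsel θ (φ θ) := by
          rw [Finset.sum_const, Finset.card_univ, Fintype.card_fin, nsmul_eq_mul]
  have hann : ∀ t, 0 ≤ dot ρbar (ℓρ t) + Tfun ℓρ ρbar := by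
    intro t
    have := neg_Tfun_le ℓρ ρbar t
    linarith
  have hsum_a : ∑ t, πsel θ t * (dot ρbar (ℓρ t) + Tfun ℓρ ρbar) =
      dot ρbar (Lrho ℓρ (πsel θ)) + Tfun ℓρ ρbar := by
    calc ∑ t, πsel θ t * (dot ρbar (ℓρ t) + Tfun ℓρ ρbar)
        = ∑ t, (πsel θ t * dot ρbar (ℓρ t) + πsel θ t * Tfun ℓρ ρbar) :=
          Finset.sum_congr rfl fun t _ => by ring
      _ = (∑ t, πsel θ t * dot ρbar (ℓρ t)) + (∑ t, πsel θ t) * Tfun ℓρ ρbar := by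
          rw [Finset.sum_add_distrib, Finset.sum_mul]
      _ = dot ρbar (Lrho ℓρ (πsel θ)) + Tfun ℓρ ρbar := by
          rw [hπsum, one_mul, dot_Lrho]
  have hchain1 : dot ρbar (ℓρ (φ θ)) + Tfun ℓρ ρbar ≤
      (N : ℝ) * (dot ρbar (Lrho ℓρ (πsel θ)) + Tfun ℓρ ρbar) := by
    set aφ : ℝ := dot ρbar (ℓρ (φ θ)) + Tfun ℓρ ρbar with haφ
    have h5 : πsel θ (φ θ) * aφ ≤ ∑ t, πsel θ t * (dot ρbar (ℓρ t) + Tfun ℓρ ρbar) :=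
      Finset.single_le_sum (f := fun t => πsel θ t * (dot ρbar (ℓρ t) + Tfun ℓρ ρbar))
        (fun t _ => mul_nonneg (hπnn t) (hann t)) (Finset.mem_univ (φ θ))
    have h6 : aφ ≤ (N : ℝ) * (πsel θ (φ θ) * aφ) := by
      nlinarith [hann (φ θ), hNπ, haφ]
    calc aφ ≤ (N : ℝ) * (πsel θ (φ θ) * aφ) := h6
      _ ≤ (N : ℝ) * (∑ t, πsel θ t * (dot ρbar (ℓρ t) + Tfun ℓρ ρbar)) :=
          mul_le_mul_of_nonneg_left h5 (Nat.cast_nonneg N)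
      _ = (N : ℝ) * (dot ρbar (Lrho ℓρ (πsel θ)) + Tfun ℓρ ρbar) := by rw [hsum_a]
  -- ### surrogate side
  set Cη : ℝ := ∑ y, η y * (OmegaT Ω ℓρ (ρ y)).toReal with hCη
  have hRsur : ∀ θ', RsurL Ω ρ ℓρ θ' η =
      starFn (OmegaT Ω ℓρ) θ' + Cη - dot ρbar θ' := by
    intro θ'
    unfold RsurL LossFY
    calc ∑ y, η y * ((conj (OmegaT Ω ℓρ) θ').toReal + (OmegaT Ω ℓρ (ρ y)).toReal
            - dot θ' (ρ y))
        = ∑ y, ((conj (OmegaT Ω ℓρ) θ').toReal * η y +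
            (η y * (OmegaT Ω ℓρ (ρ y)).toReal - η y * dot (ρ y) θ')) :=
          Finset.sum_congr rfl fun y _ => by rw [dot_comm θ' (ρ y)]; ring
      _ = (conj (OmegaT Ω ℓρ) θ').toReal * (∑ y, η y) +
            (Cη - ∑ y, η y * dot (ρ y) θ') := by
          rw [Finset.sum_add_distrib, ← Finset.mul_sum, Finset.sum_sub_distrib, hCη]
      _ = starFn (OmegaT Ω ℓρ) θ' + Cη - dot ρbar θ' := by
          rw [hηsum, mul_one, ← hdotbar θ']
          unfold starFn
          ring
  have hFY : ∀ θ', dot θ' ρbar - (OmegaT Ω ℓρ ρbar).toReal ≤ starFn (OmegaT Ω ℓρ) θ' :=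
    fun θ' => le_starFn _ θ' ρbar hOTρbot hOTρtop (conj_OmegaT_ne_top Ω ℓρ hN hbot hconjtop θ')
  have hbdd : BddBelow (Set.range fun θ' => RsurL Ω ρ ℓρ θ' η) := by
    refine ⟨Cη - (OmegaT Ω ℓρ ρbar).toReal, ?_⟩
    rintro x ⟨θ', rfl⟩
    dsimp only
    rw [hRsur θ']
    have h := hFY θ'
    rw [dot_comm θ' ρbar] at h
    linarith
  have hinf_le : (⨅ θ' : E ϱ, RsurL Ω ρ ℓρ θ' η) ≤ Cη - (OmegaT Ω ℓρ ρbar).toReal := by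
    apply le_of_forall_pos_le_add
    intro ε hε
    have hrlt : (((OmegaT Ω ℓρ ρbar).toReal - ε : ℝ) : EReal) < OmegaT Ω ℓρ ρbar := by
      conv_rhs => rw [← EReal.coe_toReal hOTρtop hOTρbot]
      exact EReal.coe_lt_coe_iff.mpr (by linarith)
    obtain ⟨v, hv⟩ := fenchel_moreau (OmegaT Ω ℓρ) (OmegaT_ne_bot Ω ℓρ hbot)
      (OmegaT_convex Ω ℓρ hN hbot hconv) (epi_OmegaT_closed Ω ℓρ hN hlsc)
      p1 ((OmegaT_ne_top_iff Ω ℓρ p1).mpr hp1) ρbar ((OmegaT Ω ℓρ ρbar).toReal - ε) hrlt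
    have hconjv : conj (OmegaT Ω ℓρ) v ≤
        ((dot v ρbar - ((OmegaT Ω ℓρ ρbar).toReal - ε) : ℝ) : EReal) :=
      conj_le _ _ _ fun q _ => hv q
    have hstarv : starFn (OmegaT Ω ℓρ) v ≤ dot v ρbar - (OmegaT Ω ℓρ ρbar).toReal + ε := by
      have := EReal.toReal_le_toReal hconjv (conj_OmegaT_ne_bot Ω ℓρ hbot p1 hp1 v)
        (EReal.coe_ne_top _)
      rw [EReal.toReal_coe] at this
      unfold starFn
      linarith
    calc (⨅ θ' : E ϱ, RsurL Ω ρ ℓρ θ' η) ≤ RsurL Ω ρ ℓρ v η := ciInf_le hbdd v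
      _ = starFn (OmegaT Ω ℓρ) v + Cη - dot ρbar v := hRsur v
      _ ≤ Cη - (OmegaT Ω ℓρ ρbar).toReal + ε := by
          rw [dot_comm ρbar v] at *
          linarith
  have hRegSur_ge : starFn (OmegaT Ω ℓρ) θ + (OmegaT Ω ℓρ ρbar).toReal - dot ρbar θ ≤
      RegSur Ω ρ ℓρ θ η := by
    unfold RegSur
    rw [hRsur θ]
    linarith [hinf_le]
  -- ### duality chain
  have hgrθ : starFn Ω (θ + Lrho ℓρ (πsel θ)) ≤ grF Ω ℓρ θ := by
    haveI : Nonempty {π : Fin N → ℝ // π ∈ stdSimplex ℝ (Fin N)} :=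
      ⟨⟨_, single_mem_simplex ⟨0, hN⟩⟩⟩
    apply le_ciInf
    rintro ⟨π', hπ'⟩
    exact EReal.toReal_le_toReal (hπmin π' hπ')
      (conj_ne_bot Ω _ p1 hp1 (hbot p1)) (hconjtop _)
  have hkey : grF Ω ℓρ θ ≤ starFn (OmegaT Ω ℓρ) θ :=
    grF_le_starFn_OmegaT Ω ℓρ hN hbot hconv hlsc p1 hp1 hconjtop θ
  have hFYΩ : dot (θ + Lrho ℓρ (πsel θ)) ρbar - (Ω ρbar).toReal ≤
      starFn Ω (θ + Lrho ℓρ (πsel θ)) :=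
    le_starFn Ω _ ρbar (hbot ρbar) hΩρtop (hconjtop _)
  have hOTtoReal : (OmegaT Ω ℓρ ρbar).toReal = (Ω ρbar).toReal + Tfun ℓρ ρbar := by
    obtain ⟨w, hw⟩ : ∃ w : ℝ, Ω ρbar = (w : EReal) :=
      ⟨_, (EReal.coe_toReal hΩρtop (hbot ρbar)).symm⟩
    unfold OmegaT
    rw [hw, ← EReal.coe_add, EReal.toReal_coe, EReal.toReal_coe]
  have hchain2 : dot ρbar (Lrho ℓρ (πsel θ)) + Tfun ℓρ ρbar ≤
      starFn (OmegaT Ω ℓρ) θ + (OmegaT Ω ℓρ ρbar).toReal - dot ρbar θ := by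
    have h1 : dot (θ + Lrho ℓρ (πsel θ)) ρbar = dot ρbar θ + dot ρbar (Lrho ℓρ (πsel θ)) := by
      rw [dot_add_left, dot_comm θ ρbar, dot_comm (Lrho ℓρ (πsel θ)) ρbar]
    rw [hOTtoReal]
    rw [h1] at hFYΩ
    linarith
  -- ### conclusion
  rw [hRegTar]
  calc dot ρbar (ℓρ (φ θ)) + Tfun ℓρ ρbar
      ≤ (N : ℝ) * (dot ρbar (Lrho ℓρ (πsel θ)) + Tfun ℓρ ρbar) := hchain1
    _ ≤ (N : ℝ) * RegSur Ω ρ ℓρ θ η :=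
        mul_le_mul_of_nonneg_left (le_trans hchain2 hRegSur_ge) (Nat.cast_nonneg N)
end
end

section
/- In the multiclass setting with the Shannon negentropy, for every θ ∈ ℝ^K the convolutional negentropy's conjugate satisfies Ω_T^*(θ) = min_{π ∈ Δ^K} ln(Σ_{i=1}^K exp(θ_i + 1 − π_i)), this minimization has a unique minimizer π_log(θ), and ∇Ω_T^*(θ) = softmax(θ + 1 − π_log(θ)), where softmax(v)_y = exp(v_y)/Σ_{i=1}^K exp(v_i). -/
open scoped BigOperators
noncomputable section

namespace MSC

variable {K : ℕ}

variable {K : ℕ}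

/-- log-sum-exp -/
def lse (v : Fin K → ℝ) : ℝ := Real.log (∑ i, Real.exp (v i))

/-- softmax -/
def smax (v : Fin K → ℝ) (i : Fin K) : ℝ := Real.exp (v i) / ∑ j, Real.exp (v j)

lemma sum_exp_pos [Nonempty (Fin K)] (v : Fin K → ℝ) : 0 < ∑ i, Real.exp (v i) :=
  Finset.sum_pos (fun i _ => Real.exp_pos _) Finset.univ_nonempty

lemma smax_pos [Nonempty (Fin K)] (v : Fin K → ℝ) (i : Fin K) : 0 < smax v i :=
  div_pos (Real.exp_pos _) (sum_exp_pos v)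

lemma smax_mem [Nonempty (Fin K)] (v : Fin K → ℝ) : smax v ∈ stdSimplex ℝ (Fin K) := by
  refine ⟨fun i => (smax_pos v i).le, ?_⟩
  simp only [smax, ← Finset.sum_div]
  exact div_self (sum_exp_pos v).ne'

lemma log_smax [Nonempty (Fin K)] (v : Fin K → ℝ) (i : Fin K) :
    Real.log (smax v i) = v i - lse v := by
  rw [smax, Real.log_div (Real.exp_pos _).ne' (sum_exp_pos v).ne', Real.log_exp, lse]

/-- Gibbs inequality -/
lemma gibbs_le [Nonempty (Fin K)] (v : Fin K → ℝ) {p : Fin K → ℝ}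
    (hp : p ∈ stdSimplex ℝ (Fin K)) :
    ∑ i, p i * v i - ∑ i, p i * Real.log (p i) ≤ lse v := by
  have key : ∀ i, p i * v i - p i * Real.log (p i) - p i * lse v ≤ smax v i - p i := by
    intro i
    rcases eq_or_lt_of_le (hp.1 i) with h | h
    · simp [← h, (smax_pos v i).le]
    · have hlog : Real.log (smax v i / p i) ≤ smax v i / p i - 1 :=
        Real.log_le_sub_one_of_pos (div_pos (smax_pos v i) h)
      have : Real.log (smax v i / p i) = v i - lse v - Real.log (p i) := by
        rw [Real.log_div (smax_pos v i).ne' h.ne', log_smax]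
      rw [this] at hlog
      have := mul_le_mul_of_nonneg_left hlog h.le
      calc p i * v i - p i * Real.log (p i) - p i * lse v
          = p i * (v i - lse v - Real.log (p i)) := by ring
        _ ≤ p i * (smax v i / p i - 1) := this
        _ = smax v i - p i := by field_simp
  have hsum := Finset.sum_le_sum (fun i (_ : i ∈ Finset.univ) => key i)
  have h1 : ∑ i, (p i * v i - p i * Real.log (p i) - p i * lse v)
      = ∑ i, p i * v i - ∑ i, p i * Real.log (p i) - lse v := by
    rw [Finset.sum_sub_distrib, Finset.sum_sub_distrib, ← Finset.sum_mul, hp.2, one_mul]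
  have h2 : ∑ i, (smax v i - p i) = 0 := by
    rw [Finset.sum_sub_distrib, (smax_mem v).2, hp.2, sub_self]
  rw [h1, h2] at hsum
  linarith

lemma gibbs_eq [Nonempty (Fin K)] (v : Fin K → ℝ) :
    ∑ i, smax v i * v i - ∑ i, smax v i * Real.log (smax v i) = lse v := by
  have : ∀ i, smax v i * v i - smax v i * Real.log (smax v i) = smax v i * lse v := by
    intro i; rw [log_smax]; ring
  rw [← Finset.sum_sub_distrib]
  simp_rw [this]
  rw [← Finset.sum_mul, (smax_mem v).2, one_mul]


variable {K : ℕ}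

def ff (θ : E K) (π : Fin K → ℝ) : ℝ := Real.log (∑ i, Real.exp (θ i + 1 - π i))

def Mx [Nonempty (Fin K)] (p : Fin K → ℝ) : ℝ := Finset.univ.sup' Finset.univ_nonempty p

lemma le_Mx [Nonempty (Fin K)] (p : Fin K → ℝ) (j : Fin K) : p j ≤ Mx p :=
  Finset.le_sup' p (Finset.mem_univ j)

lemma exists_Mx [Nonempty (Fin K)] (p : Fin K → ℝ) : ∃ j, Mx p = p j := by
  obtain ⟨j, _, hj⟩ := Finset.exists_mem_eq_sup' Finset.univ_nonempty p
  exact ⟨j, hj⟩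

lemma inner_le_Mx [Nonempty (Fin K)] {π : Fin K → ℝ} (hπ : π ∈ stdSimplex ℝ (Fin K))
    {p : Fin K → ℝ} : ∑ t, π t * p t ≤ Mx p := by
  calc ∑ t, π t * p t ≤ ∑ t, π t * Mx p :=
        Finset.sum_le_sum fun t _ => mul_le_mul_of_nonneg_left (le_Mx p t) (hπ.1 t)
    _ = Mx p := by rw [← Finset.sum_mul, hπ.2, one_mul]

lemma ff_continuous [Nonempty (Fin K)] (θ : E K) : Continuous (ff θ) := by
  have hpos : ∀ π : Fin K → ℝ, (0:ℝ) < ∑ i, Real.exp (θ i + 1 - π i) := fun π =>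
    Finset.sum_pos (fun i _ => Real.exp_pos _) Finset.univ_nonempty
  have hc : Continuous fun π : Fin K → ℝ => ∑ i, Real.exp (θ i + 1 - π i) := by
    apply continuous_finset_sum
    intro i _
    exact (Real.continuous_exp.comp (by continuity))
  exact hc.log fun π => (hpos π).ne'

lemma exists_min [Nonempty (Fin K)] (θ : E K) :
    ∃ π ∈ stdSimplex ℝ (Fin K), ∀ π' ∈ stdSimplex ℝ (Fin K), ff θ π ≤ ff θ π' := by
  obtain ⟨π, hπ, hmin⟩ := (isCompact_stdSimplex ℝ (Fin K)).exists_isMinOn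
    ⟨_, ite_eq_mem_stdSimplex ℝ (Classical.arbitrary (Fin K))⟩ (ff_continuous θ).continuousOn
  exact ⟨π, hπ, fun π' hπ' => hmin hπ'⟩

/-- First-order condition at a minimizer. -/
lemma foc [Nonempty (Fin K)] (θ : E K) {π : Fin K → ℝ} (hπ : π ∈ stdSimplex ℝ (Fin K))
    (hmin : ∀ π' ∈ stdSimplex ℝ (Fin K), ff θ π ≤ ff θ π') (j : Fin K) :
    Real.exp (θ j + 1 - π j) ≤ ∑ i, Real.exp (θ i + 1 - π i) * π i := by
  set v : Fin K → ℝ := fun i => θ i + 1 - π i with hv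
  set d : Fin K → ℝ := fun i => (if j = i then (1:ℝ) else 0) - π i with hd
  set φ : ℝ → ℝ := fun s => Real.log (∑ i, Real.exp (v i - s * d i)) with hφdef
  have hS : (0:ℝ) < ∑ i, Real.exp (v i) :=
    Finset.sum_pos (fun i _ => Real.exp_pos _) Finset.univ_nonempty
  -- derivative of φ at 0
  have hterm : ∀ i : Fin K, HasDerivAt (fun s : ℝ => Real.exp (v i - s * d i))
      (Real.exp (v i) * (-(d i))) 0 := by
    intro i
    have h1 : HasDerivAt (fun s : ℝ => v i - s * d i) (-(d i)) 0 :=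
      (hasDerivAt_mul_const (d i)).const_sub (v i)
    simpa using h1.exp
  have hsum : HasDerivAt (fun s : ℝ => ∑ i, Real.exp (v i - s * d i))
      (∑ i, Real.exp (v i) * (-(d i))) 0 := HasDerivAt.fun_sum fun i _ => hterm i
  have hS0 : (∑ i, Real.exp (v i - 0 * d i)) ≠ 0 := by
    simpa using hS.ne'
  have hφ : HasDerivAt φ ((∑ i, Real.exp (v i) * (-(d i))) / ∑ i, Real.exp (v i)) 0 := by
    have := hsum.log hS0
    simpa using this
  -- φ has a minimum at 0 on [0,1]
  have hmem : ∀ s ∈ Set.Icc (0:ℝ) 1, φ 0 ≤ φ s := by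
    intro s hs
    have hπs : (fun i => (1 - s) * π i + s * (if j = i then (1:ℝ) else 0)) ∈
        stdSimplex ℝ (Fin K) := by
      have := (convex_stdSimplex ℝ (Fin K)) hπ (ite_eq_mem_stdSimplex ℝ j)
        (by linarith [hs.2] : (0:ℝ) ≤ 1 - s) hs.1 (by ring)
      simpa [Pi.add_def, Pi.smul_def, smul_eq_mul] using this
    have h0 : φ 0 = ff θ π := by
      simp [hφdef, ff, hv]
    have h1 : φ s = ff θ fun i => (1 - s) * π i + s * (if j = i then (1:ℝ) else 0) := by
      simp only [hφdef, ff]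
      congr 1
      apply Finset.sum_congr rfl
      intro i _
      congr 1
      simp only [hv, hd]
      ring
    rw [h0, h1]
    exact hmin _ hπs
  -- the derivative is nonnegative
  have hslope : Filter.Tendsto (slope φ 0) (nhdsWithin 0 (Set.Ioi 0))
      (nhds ((∑ i, Real.exp (v i) * (-(d i))) / ∑ i, Real.exp (v i))) := by
    refine (hasDerivAt_iff_tendsto_slope.mp hφ).mono_left (nhdsWithin_mono 0 ?_)
    intro x hx
    exact ne_of_gt hx
  have hD : 0 ≤ (∑ i, Real.exp (v i) * (-(d i))) / ∑ i, Real.exp (v i) := by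
    refine ge_of_tendsto hslope ?_
    filter_upwards [Ioc_mem_nhdsGT_of_mem (Set.left_mem_Ico.mpr one_pos)] with s hs
    rw [slope_def_field]
    have := hmem s ⟨hs.1.le, hs.2⟩
    have h01 : (0:ℝ) < s - 0 := by simpa using hs.1
    exact div_nonneg (by linarith) h01.le
  have hnum : 0 ≤ ∑ i, Real.exp (v i) * (-(d i)) := by
    have := mul_nonneg hD hS.le
    rwa [div_mul_cancel₀ _ hS.ne'] at this
  have hsplit : ∑ i, Real.exp (v i) * (-(d i))
      = (∑ i, Real.exp (v i) * π i) - Real.exp (v j) := by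
    have hterm' : ∀ x : Fin K, Real.exp (v x) * (-(d x))
        = Real.exp (v x) * π x - (if j = x then Real.exp (v x) else 0) := by
      intro x
      simp only [hd]
      by_cases h : j = x <;> simp [h] <;> ring
    simp only [hterm']
    rw [Finset.sum_sub_distrib, Finset.sum_ite_eq]
    simp
  rw [hsplit] at hnum
  linarith


variable {K : ℕ}


lemma Tfun_eq [Nonempty (Fin K)] {ℓρ : Fin K → E K}
    (hℓρ : ∀ t : Fin K, ∀ i, ℓρ t i = if i = t then 0 else 1) (p : E K) :
    Tfun ℓρ p = Mx p - ∑ i, p i := by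
  have hdot : ∀ t, dot p (ℓρ t) = (∑ i, p i) - p t := by
    intro t
    have : ∀ i, p i * ℓρ t i = p i - (if i = t then p i else 0) := by
      intro i
      rw [hℓρ t i]
      by_cases h : i = t <;> simp [h]
    rw [dot]
    simp_rw [this]
    rw [Finset.sum_sub_distrib, Finset.sum_ite_eq' Finset.univ t p]
    simp
  have hinf : ⨅ t, dot p (ℓρ t) = (∑ i, p i) - Mx p := by
    apply le_antisymm
    · obtain ⟨j, hj⟩ := exists_Mx p
      calc ⨅ t, dot p (ℓρ t) ≤ dot p (ℓρ j) := ciInf_le (Set.Finite.bddBelow (Set.finite_range _)) j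
        _ = (∑ i, p i) - Mx p := by rw [hdot, hj]
    · refine le_ciInf fun t => ?_
      rw [hdot]
      have := le_Mx p t
      linarith
  rw [Tfun, hinf]
  ring

variable {Ω : E K → EReal} {ℓρ : Fin K → E K}

lemma OmegaT_on [Nonempty (Fin K)]
    (hΩ : ∀ p : E K, (p.ofLp ∈ stdSimplex ℝ (Fin K) →
        Ω p = (((∑ i, p i * Real.log (p i)) : ℝ) : EReal)) ∧
      (p.ofLp ∉ stdSimplex ℝ (Fin K) → Ω p = ⊤))
    (hℓρ : ∀ t : Fin K, ∀ i, ℓρ t i = if i = t then 0 else 1)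
    {p : E K} (hp : p.ofLp ∈ stdSimplex ℝ (Fin K)) :
    OmegaT Ω ℓρ p = ((((∑ i, p i * Real.log (p i)) + Mx p - 1 : ℝ)) : EReal) := by
  rw [OmegaT, (hΩ p).1 hp, Tfun_eq hℓρ, ← EReal.coe_add]
  norm_cast
  rw [hp.2]
  ring

lemma OmegaT_off
    (hΩ : ∀ p : E K, (p.ofLp ∈ stdSimplex ℝ (Fin K) →
        Ω p = (((∑ i, p i * Real.log (p i)) : ℝ) : EReal)) ∧
      (p.ofLp ∉ stdSimplex ℝ (Fin K) → Ω p = ⊤))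
    {p : E K} (hp : p.ofLp ∉ stdSimplex ℝ (Fin K)) :
    OmegaT Ω ℓρ p = ⊤ := by
  rw [OmegaT, (hΩ p).2 hp]
  exact EReal.top_add_coe _

lemma dom_eq [Nonempty (Fin K)]
    (hΩ : ∀ p : E K, (p.ofLp ∈ stdSimplex ℝ (Fin K) →
        Ω p = (((∑ i, p i * Real.log (p i)) : ℝ) : EReal)) ∧
      (p.ofLp ∉ stdSimplex ℝ (Fin K) → Ω p = ⊤))
    (hℓρ : ∀ t : Fin K, ∀ i, ℓρ t i = if i = t then 0 else 1) :
    {q : E K | OmegaT Ω ℓρ q ≠ ⊤} = {q : E K | q.ofLp ∈ stdSimplex ℝ (Fin K)} := by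
  ext p
  simp only [Set.mem_setOf_eq]
  constructor
  · intro h
    by_contra hc
    exact h (OmegaT_off hΩ hc)
  · intro hp
    rw [OmegaT_on hΩ hℓρ hp]
    exact EReal.coe_ne_top _

/-- concave objective of the sup -/
def G [Nonempty (Fin K)] (θ p : E K) : ℝ :=
  dot θ p - (∑ i, p i * Real.log (p i)) - Mx p + 1

lemma conj_eq_sup [Nonempty (Fin K)]
    (hΩ : ∀ p : E K, (p.ofLp ∈ stdSimplex ℝ (Fin K) →
        Ω p = (((∑ i, p i * Real.log (p i)) : ℝ) : EReal)) ∧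
      (p.ofLp ∉ stdSimplex ℝ (Fin K) → Ω p = ⊤))
    (hℓρ : ∀ t : Fin K, ∀ i, ℓρ t i = if i = t then 0 else 1) (θ : E K) :
    conj (OmegaT Ω ℓρ) θ = ⨆ p ∈ {q : E K | q.ofLp ∈ stdSimplex ℝ (Fin K)}, ((G θ p : ℝ) : EReal) := by
  rw [conj, dom_eq hΩ hℓρ]
  refine biSup_congr fun p hp => ?_
  rw [OmegaT_on hΩ hℓρ hp, ← EReal.coe_sub]
  norm_cast
  rw [G]
  ring


lemma G_le_ff [Nonempty (Fin K)] (θ : E K) {p : E K} (hp : p.ofLp ∈ stdSimplex ℝ (Fin K))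
    {π : Fin K → ℝ} (hπ : π ∈ stdSimplex ℝ (Fin K)) : G θ p ≤ ff θ π := by
  have h1 := gibbs_le (fun i => θ i + 1 - π i) hp
  have h2 : ∑ i, p i * (θ i + 1 - π i) = dot θ p + 1 - ∑ t, π t * p t := by
    have hterm : ∀ i, p i * (θ i + 1 - π i) = θ i * p i + p i - π i * p i := fun i => by ring
    simp_rw [hterm]
    rw [Finset.sum_sub_distrib, Finset.sum_add_distrib, hp.2, dot]
  rw [h2] at h1
  have h3 : ∑ t, π t * p t ≤ Mx p := inner_le_Mx hπ
  have h4 : ff θ π = lse (fun i => θ i + 1 - π i) := rfl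
  rw [G, h4]
  linarith

lemma Mx_smax_eq [Nonempty (Fin K)] (θ : E K) {π : Fin K → ℝ}
    (hπ : π ∈ stdSimplex ℝ (Fin K))
    (hmin : ∀ π' ∈ stdSimplex ℝ (Fin K), ff θ π ≤ ff θ π') :
    Mx (smax fun i => θ i + 1 - π i)
      = ∑ t, π t * smax (fun i => θ i + 1 - π i) t := by
  set v : Fin K → ℝ := fun i => θ i + 1 - π i with hv
  have hS : (0:ℝ) < ∑ i, Real.exp (v i) := sum_exp_pos v
  apply le_antisymm
  · obtain ⟨j, hj⟩ := exists_Mx (smax v)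
    rw [hj]
    have hfoc := foc θ hπ hmin j
    have hsum : ∑ t, π t * smax v t
        = (∑ i, Real.exp (v i) * π i) / ∑ i, Real.exp (v i) := by
      rw [Finset.sum_div]
      exact Finset.sum_congr rfl fun t _ => by rw [smax]; ring
    rw [hsum, smax, div_le_div_iff_of_pos_right hS]
    exact hfoc
  · exact inner_le_Mx hπ

lemma G_attain [Nonempty (Fin K)] (θ : E K) {π : Fin K → ℝ}
    (hπ : π ∈ stdSimplex ℝ (Fin K))
    (hmin : ∀ π' ∈ stdSimplex ℝ (Fin K), ff θ π ≤ ff θ π') :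
    G θ (WithLp.toLp 2 (smax fun i => θ i + 1 - π i)) = ff θ π := by
  set v : Fin K → ℝ := fun i => θ i + 1 - π i with hv
  set q : E K := WithLp.toLp 2 (smax v) with hq
  have hge := gibbs_eq v
  have hsum : ∑ i, smax v i * v i = dot θ q + 1 - ∑ t, π t * smax v t := by
    have hterm : ∀ i, smax v i * v i = θ i * smax v i + smax v i - π i * smax v i :=
      fun i => by rw [hv]; ring
    simp_rw [hterm]
    rw [Finset.sum_sub_distrib, Finset.sum_add_distrib, (smax_mem v).2, dot]
  have hM := Mx_smax_eq θ hπ hmin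
  have hff : ff θ π = lse v := rfl
  rw [hsum] at hge
  rw [G, hff]
  have : Mx q = Mx (smax v) := rfl
  rw [this, hM]
  linarith

lemma conj_value [Nonempty (Fin K)]
    (hΩ : ∀ p : E K, (p.ofLp ∈ stdSimplex ℝ (Fin K) →
        Ω p = (((∑ i, p i * Real.log (p i)) : ℝ) : EReal)) ∧
      (p.ofLp ∉ stdSimplex ℝ (Fin K) → Ω p = ⊤))
    (hℓρ : ∀ t : Fin K, ∀ i, ℓρ t i = if i = t then 0 else 1) (θ : E K)
    {π : Fin K → ℝ} (hπ : π ∈ stdSimplex ℝ (Fin K))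
    (hmin : ∀ π' ∈ stdSimplex ℝ (Fin K), ff θ π ≤ ff θ π') :
    conj (OmegaT Ω ℓρ) θ = ((ff θ π : ℝ) : EReal) := by
  rw [conj_eq_sup hΩ hℓρ]
  apply le_antisymm
  · exact iSup₂_le fun p hp => EReal.coe_le_coe_iff.mpr (G_le_ff θ hp hπ)
  · refine le_iSup₂_of_le (WithLp.toLp 2 (smax fun i => θ i + 1 - π i))
      (smax_mem _) ?_
    rw [G_attain θ hπ hmin]

lemma smax_inj [Nonempty (Fin K)] (θ : E K) {π1 π2 : Fin K → ℝ}
    (h1 : π1 ∈ stdSimplex ℝ (Fin K)) (h2 : π2 ∈ stdSimplex ℝ (Fin K))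
    (h : smax (fun i => θ i + 1 - π1 i) = smax (fun i => θ i + 1 - π2 i)) :
    π1 = π2 := by
  set l1 := lse (fun i => θ i + 1 - π1 i) with hl1
  set l2 := lse (fun i => θ i + 1 - π2 i) with hl2
  have key : ∀ i, π2 i - π1 i = l1 - l2 := by
    intro i
    have hlog := congrArg Real.log (congrFun h i)
    rw [log_smax, log_smax] at hlog
    rw [hl1, hl2]
    linarith
  have hsum : ∑ i, (π2 i - π1 i) = ∑ _i : Fin K, (l1 - l2) :=
    Finset.sum_congr rfl fun i _ => key i
  rw [Finset.sum_sub_distrib, h2.2, h1.2, sub_self, Finset.sum_const,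
    Finset.card_univ, Fintype.card_fin] at hsum
  have hKpos : (0:ℝ) < K := by
    have : 0 < K := Fin.pos_iff_nonempty.mpr ‹_›
    exact_mod_cast this
  have hl : l1 = l2 := by
    have h0 : (K:ℝ) * (l1 - l2) = 0 := by
      have := hsum.symm
      rwa [nsmul_eq_mul] at this
    rcases mul_eq_zero.mp h0 with h' | h'
    · exact absurd h' hKpos.ne'
    · linarith
  funext i
  have := key i
  rw [hl] at this
  linarith

lemma strict_unique_max [Nonempty (Fin K)] (θ : E K) {p1 p2 : E K}
    (hp1 : p1.ofLp ∈ stdSimplex ℝ (Fin K)) (hp2 : p2.ofLp ∈ stdSimplex ℝ (Fin K))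
    {V : ℝ} (hv1 : G θ p1 = V) (hv2 : G θ p2 = V)
    (hub : ∀ p : E K, p.ofLp ∈ stdSimplex ℝ (Fin K) → G θ p ≤ V) : p1 = p2 := by
  by_contra hne
  obtain ⟨i0, hi0⟩ : ∃ i, p1 i ≠ p2 i := by
    by_contra hall
    push_neg at hall
    exact hne (PiLp.ext hall)
  set m : E K := WithLp.toLp 2 (fun i => (p1 i + p2 i) / 2) with hm
  have hmmem : m.ofLp ∈ stdSimplex ℝ (Fin K) := by
    constructor
    · intro i
      have := hp1.1 i; have := hp2.1 i
      simp only [hm, WithLp.ofLp_toLp]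
      positivity
    · have : ∑ i, m i = (∑ i, p1 i + ∑ i, p2 i) / 2 := by
        simp only [hm, WithLp.ofLp_toLp]
        rw [← Finset.sum_add_distrib, Finset.sum_div]
      rw [this, hp1.2, hp2.2]; norm_num
  have hdot : dot θ m = (dot θ p1 + dot θ p2) / 2 := by
    simp only [dot, hm, WithLp.ofLp_toLp]
    rw [← Finset.sum_add_distrib, Finset.sum_div]
    exact Finset.sum_congr rfl fun i _ => by ring
  have hMx : Mx m ≤ (Mx p1 + Mx p2) / 2 := by
    apply Finset.sup'_le
    intro j _
    have := le_Mx p1 j; have := le_Mx p2 j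
    show (p1 j + p2 j) / 2 ≤ _
    linarith
  have hent : ∑ i, m i * Real.log (m i)
      < (∑ i, p1 i * Real.log (p1 i) + ∑ i, p2 i * Real.log (p2 i)) / 2 := by
    have hrhs : (∑ i, p1 i * Real.log (p1 i) + ∑ i, p2 i * Real.log (p2 i)) / 2
        = ∑ i, (p1 i * Real.log (p1 i) + p2 i * Real.log (p2 i)) / 2 := by
      rw [← Finset.sum_add_distrib, Finset.sum_div]
    rw [hrhs]
    apply Finset.sum_lt_sum
    · intro i _
      have hc := Real.convexOn_mul_log.2 (hp1.1 i) (hp2.1 i)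
        (by norm_num : (0:ℝ) ≤ 1/2) (by norm_num : (0:ℝ) ≤ 1/2) (by norm_num)
      simp only [smul_eq_mul] at hc
      have hmi : m i = 1/2 * p1 i + 1/2 * p2 i := by simp only [hm, WithLp.ofLp_toLp]; ring
      rw [hmi]
      calc (1/2 * p1 i + 1/2 * p2 i) * Real.log (1/2 * p1 i + 1/2 * p2 i)
          ≤ 1/2 * (p1 i * Real.log (p1 i)) + 1/2 * (p2 i * Real.log (p2 i)) := hc
        _ = (p1 i * Real.log (p1 i) + p2 i * Real.log (p2 i)) / 2 := by ring
    · refine ⟨i0, Finset.mem_univ _, ?_⟩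
      have hc := Real.strictConvexOn_mul_log.2 (hp1.1 i0) (hp2.1 i0) hi0
        (by norm_num : (0:ℝ) < 1/2) (by norm_num : (0:ℝ) < 1/2) (by norm_num)
      simp only [smul_eq_mul] at hc
      have hmi : m i0 = 1/2 * p1 i0 + 1/2 * p2 i0 := by simp only [hm, WithLp.ofLp_toLp]; ring
      rw [hmi]
      calc (1/2 * p1 i0 + 1/2 * p2 i0) * Real.log (1/2 * p1 i0 + 1/2 * p2 i0)
          < 1/2 * (p1 i0 * Real.log (p1 i0)) + 1/2 * (p2 i0 * Real.log (p2 i0)) := hc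
        _ = (p1 i0 * Real.log (p1 i0) + p2 i0 * Real.log (p2 i0)) / 2 := by ring
  have h1 := hub m hmmem
  rw [G] at h1
  rw [G] at hv1
  rw [G] at hv2
  linarith

lemma min_unique [Nonempty (Fin K)] (θ : E K) {π1 π2 : Fin K → ℝ}
    (hπ1 : π1 ∈ stdSimplex ℝ (Fin K))
    (hmin1 : ∀ π' ∈ stdSimplex ℝ (Fin K), ff θ π1 ≤ ff θ π')
    (hπ2 : π2 ∈ stdSimplex ℝ (Fin K))
    (hmin2 : ∀ π' ∈ stdSimplex ℝ (Fin K), ff θ π2 ≤ ff θ π') : π1 = π2 := by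
  have hVeq : ff θ π2 = ff θ π1 :=
    le_antisymm (hmin2 π1 hπ1) (hmin1 π2 hπ2)
  have hval1 := G_attain θ hπ1 hmin1
  have hval2 := G_attain θ hπ2 hmin2
  rw [hVeq] at hval2
  have hq : (WithLp.toLp 2 (smax fun i => θ i + 1 - π1 i))
      = (WithLp.toLp 2 (smax fun i => θ i + 1 - π2 i)) :=
    strict_unique_max θ (smax_mem _) (smax_mem _) hval1 hval2
      (fun p hp => G_le_ff θ hp hπ1)
  exact smax_inj θ hπ1 hπ2 (congrArg WithLp.ofLp hq)

lemma toDual_apply_sum [Nonempty (Fin K)] (q w : E K) :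
    (InnerProductSpace.toDual ℝ (E K)) q w = ∑ i, q i * w i := by
  simp [InnerProductSpace.toDual_apply_apply, PiLp.inner_apply, RCLike.inner_apply, conj_trivial, mul_comm]

lemma hasFDerivAt_ff [Nonempty (Fin K)] (π : Fin K → ℝ) (θ : E K) :
    HasFDerivAt (fun θ' : E K => ff θ' π)
      ((InnerProductSpace.toDual ℝ (E K)) (WithLp.toLp 2 (smax fun i => θ i + 1 - π i))) θ := by
  set v : Fin K → ℝ := fun i => θ i + 1 - π i with hv
  have hS : (0:ℝ) < ∑ i, Real.exp (v i) := sum_exp_pos v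
  have hterm : ∀ i : Fin K, HasFDerivAt (fun θ' : E K => Real.exp (θ' i + 1 - π i))
      (Real.exp (v i) • (EuclideanSpace.proj i : E K →L[ℝ] ℝ)) θ := by
    intro i
    have hproj : HasFDerivAt (fun θ' : E K => θ' i)
        (EuclideanSpace.proj i : E K →L[ℝ] ℝ) θ :=
      (EuclideanSpace.proj (𝕜 := ℝ) i).hasFDerivAt
    have h1 : HasFDerivAt (fun θ' : E K => θ' i + 1 - π i)
        (EuclideanSpace.proj i : E K →L[ℝ] ℝ) θ := by
      simpa [add_sub_assoc] using (hproj.add_const (1 - π i))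
    simpa [hv] using h1.exp
  have hsum : HasFDerivAt (fun θ' : E K => ∑ i, Real.exp (θ' i + 1 - π i))
      (∑ i, Real.exp (v i) • (EuclideanSpace.proj i : E K →L[ℝ] ℝ)) θ :=
    HasFDerivAt.fun_sum fun i _ => hterm i
  have hlog := hsum.log (by simpa [hv] using hS.ne')
  have hF : (∑ i, Real.exp (θ i + 1 - π i))⁻¹ •
        (∑ i, Real.exp (v i) • (EuclideanSpace.proj i : E K →L[ℝ] ℝ))
      = (InnerProductSpace.toDual ℝ (E K)) (WithLp.toLp 2 (smax v)) := by
    apply ContinuousLinearMap.ext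
    intro w
    rw [toDual_apply_sum]
    simp only [ContinuousLinearMap.smul_apply, ContinuousLinearMap.coe_sum',
      Finset.sum_apply, smul_eq_mul, WithLp.ofLp_toLp]
    rw [Finset.mul_sum]
    refine Finset.sum_congr rfl fun i _ => ?_
    have hproj : (EuclideanSpace.proj (𝕜 := ℝ) i) w = w i := rfl
    have hqi : smax v i = Real.exp (v i) / ∑ j, Real.exp (v j) := rfl
    rw [hproj, hqi, hv]
    field_simp
  rw [hF] at hlog
  exact hlog

lemma star_eq [Nonempty (Fin K)]
    (hΩ : ∀ p : E K, (p.ofLp ∈ stdSimplex ℝ (Fin K) →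
        Ω p = (((∑ i, p i * Real.log (p i)) : ℝ) : EReal)) ∧
      (p.ofLp ∉ stdSimplex ℝ (Fin K) → Ω p = ⊤))
    (hℓρ : ∀ t : Fin K, ∀ i, ℓρ t i = if i = t then 0 else 1) (θ : E K)
    {π : Fin K → ℝ} (hπ : π ∈ stdSimplex ℝ (Fin K))
    (hmin : ∀ π' ∈ stdSimplex ℝ (Fin K), ff θ π ≤ ff θ π') :
    starFn (OmegaT Ω ℓρ) θ = ff θ π := by
  show (conj (OmegaT Ω ℓρ) θ).toReal = ff θ π
  rw [conj_value hΩ hℓρ θ hπ hmin, EReal.toReal_coe]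

lemma hasGradientAt_star [Nonempty (Fin K)]
    (hΩ : ∀ p : E K, (p.ofLp ∈ stdSimplex ℝ (Fin K) →
        Ω p = (((∑ i, p i * Real.log (p i)) : ℝ) : EReal)) ∧
      (p.ofLp ∉ stdSimplex ℝ (Fin K) → Ω p = ⊤))
    (hℓρ : ∀ t : Fin K, ∀ i, ℓρ t i = if i = t then 0 else 1) (θ : E K)
    {π : Fin K → ℝ} (hπ : π ∈ stdSimplex ℝ (Fin K))
    (hmin : ∀ π' ∈ stdSimplex ℝ (Fin K), ff θ π ≤ ff θ π') :
    HasGradientAt (starFn (OmegaT Ω ℓρ))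
      (WithLp.toLp 2 (smax fun i => θ i + 1 - π i)) θ := by
  set q : E K := WithLp.toLp 2 (smax fun i => θ i + 1 - π i) with hqdef
  have hqmem : q.ofLp ∈ stdSimplex ℝ (Fin K) := smax_mem _
  have hstar_le : ∀ θ' : E K, ∀ π' ∈ stdSimplex ℝ (Fin K),
      starFn (OmegaT Ω ℓρ) θ' ≤ ff θ' π' := by
    intro θ' π' hπ'
    obtain ⟨πm, hπm, hminm⟩ := exists_min θ'
    rw [star_eq hΩ hℓρ θ' hπm hminm]
    exact hminm π' hπ'
  have hstar_ge : ∀ θ' : E K, ∀ p : E K, p.ofLp ∈ stdSimplex ℝ (Fin K) →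
      G θ' p ≤ starFn (OmegaT Ω ℓρ) θ' := by
    intro θ' p hp
    obtain ⟨πm, hπm, hminm⟩ := exists_min θ'
    rw [star_eq hΩ hℓρ θ' hπm hminm]
    exact G_le_ff θ' hp hπm
  have hθval : starFn (OmegaT Ω ℓρ) θ = ff θ π := star_eq hΩ hℓρ θ hπ hmin
  have hGq : G θ q = ff θ π := G_attain θ hπ hmin
  have hh : HasFDerivAt (fun θ' : E K => ff θ' π)
      ((InnerProductSpace.toDual ℝ (E K)) q) θ := hasFDerivAt_ff π θ
  rw [hasGradientAt_iff_hasFDerivAt, hasFDerivAt_iff_isLittleO_nhds_zero]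
  have hhO := hasFDerivAt_iff_isLittleO_nhds_zero.mp hh
  refine (Asymptotics.isBigO_of_le _ ?_).trans_isLittleO hhO
  intro w
  set A : ℝ := starFn (OmegaT Ω ℓρ) (θ + w) - starFn (OmegaT Ω ℓρ) θ
      - (InnerProductSpace.toDual ℝ (E K)) q w with hA
  set B : ℝ := ff (θ + w) π - ff θ π - (InnerProductSpace.toDual ℝ (E K)) q w with hB
  have hdual : (InnerProductSpace.toDual ℝ (E K)) q w = ∑ i, w i * q i := by
    rw [toDual_apply_sum]
    exact Finset.sum_congr rfl fun i _ => mul_comm _ _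
  have hGshift : G (θ + w) q = G θ q + ∑ i, w i * q i := by
    have hdot : dot (θ + w) q = dot θ q + ∑ i, w i * q i := by
      rw [dot, dot, ← Finset.sum_add_distrib]
      refine Finset.sum_congr rfl fun i _ => ?_
      have : (θ + w) i = θ i + w i := rfl
      rw [this]; ring
    rw [G, G, hdot]; ring
  have hA0 : 0 ≤ A := by
    have l1 : G (θ + w) q ≤ starFn (OmegaT Ω ℓρ) (θ + w) := hstar_ge _ q hqmem
    rw [hA, hdual, hθval, ← hGq]
    rw [hGshift] at l1
    linarith
  have hAB : A ≤ B := by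
    have l2 : starFn (OmegaT Ω ℓρ) (θ + w) ≤ ff (θ + w) π := hstar_le _ π hπ
    rw [hA, hB, hθval]
    linarith
  show ‖A‖ ≤ ‖B‖
  rw [Real.norm_eq_abs, Real.norm_eq_abs, abs_of_nonneg hA0]
  exact hAB.trans (le_abs_self B)
end MSC


/-- Multiclass setting with the Shannon negentropy: `Ω_T^*(θ)` equals the perturbed
log-sum-exp `min_{π ∈ Δ^K} ln Σ_i exp(θ_i + 1 − π_i)`, this minimum has a unique minimizer
`π_log(θ)`, and `∇Ω_T^*(θ) = softmax(θ + 1 − π_log(θ))`. -/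
theorem multiclass_shannon_conjugate_and_gradient
    {K : ℕ} (hK : 0 < K)
    (Ω : E K → EReal)
    (hΩ : ∀ p : E K,
      (p.ofLp ∈ stdSimplex ℝ (Fin K) →
        Ω p = (((∑ i, p i * Real.log (p i)) : ℝ) : EReal)) ∧
      (p.ofLp ∉ stdSimplex ℝ (Fin K) → Ω p = ⊤))
    (ρ : Fin K → E K) (hρ : ∀ y : Fin K, ∀ i, ρ y i = if i = y then 1 else 0)
    (ℓρ : Fin K → E K) (hℓρ : ∀ t : Fin K, ∀ i, ℓρ t i = if i = t then 0 else 1) :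
    ∀ θ : E K,
      (conj (OmegaT Ω ℓρ) θ
        = ⨅ π ∈ stdSimplex ℝ (Fin K),
            (((Real.log (∑ i, Real.exp (θ i + 1 - π i))) : ℝ) : EReal)) ∧
      (∃! π : Fin K → ℝ, π ∈ stdSimplex ℝ (Fin K) ∧
        ∀ π' ∈ stdSimplex ℝ (Fin K),
          Real.log (∑ i, Real.exp (θ i + 1 - π i))
            ≤ Real.log (∑ i, Real.exp (θ i + 1 - π' i))) ∧
      (∀ π : Fin K → ℝ,
        (π ∈ stdSimplex ℝ (Fin K) ∧
          ∀ π' ∈ stdSimplex ℝ (Fin K),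
            Real.log (∑ i, Real.exp (θ i + 1 - π i))
              ≤ Real.log (∑ i, Real.exp (θ i + 1 - π' i))) →
        ∀ y : Fin K,
          gradient (starFn (OmegaT Ω ℓρ)) θ y
            = Real.exp (θ y + 1 - π y) / ∑ i, Real.exp (θ i + 1 - π i)) := by
  intro θ
  haveI : Nonempty (Fin K) := Fin.pos_iff_nonempty.mp hK
  obtain ⟨πs, hπs, hmins⟩ := MSC.exists_min θ
  refine ⟨?_, ?_, ?_⟩
  · rw [MSC.conj_value hΩ hℓρ θ hπs hmins]
    apply le_antisymm
    · exact le_iInf₂ fun π hπ => EReal.coe_le_coe_iff.mpr (hmins π hπ)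
    · exact iInf₂_le πs hπs
  · exact ⟨πs, ⟨hπs, hmins⟩, fun π' h' => MSC.min_unique θ h'.1 h'.2 hπs hmins⟩
  · rintro π ⟨hπ, hminπ⟩ y
    have hg := (MSC.hasGradientAt_star hΩ hℓρ θ hπ hminπ).gradient
    rw [hg]
    rfl
end
end

section
/- In the multiclass setting with the Shannon negentropy, for every θ ∈ ℝ^K the problem min_{π ∈ Δ^K} ln(Σ_{i=1}^K exp(θ_i + 1 − π_i)) has a unique minimizer π_log(θ), given coordinatewise by π_log(θ)_i = max{θ_i − τ(θ), 0}, where τ(θ) = (Σ_{i=1}^n θ_{[i]} − 1)/n, the entries θ_{[1]} ≥ θ_{[2]} ≥ … ≥ θ_{[K]} are θ sorted in decreasing order, and n = max{ k ∈ {1,…,K} : 1 + k·θ_{[k]} > Σ_{i=1}^k θ_{[i]} }. -/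
open scoped BigOperators
noncomputable section

/-- First-order bound from convexity of `exp`. -/
lemma exp_lin_le' (a x : ℝ) : Real.exp a * (x - a + 1) ≤ Real.exp x := by
  have h := Real.add_one_le_exp (x - a)
  have h2 : Real.exp a * (x - a + 1) ≤ Real.exp a * Real.exp (x - a) :=
    mul_le_mul_of_nonneg_left h (Real.exp_pos a).le
  have h3 : a + (x - a) = x := by ring
  rwa [← Real.exp_add, h3] at h2

/-- Equality case in the first-order bound (strict convexity of `exp`). -/
lemma exp_lin_eq' {a x : ℝ} (h : Real.exp x ≤ Real.exp a * (x - a + 1)) : x = a := by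
  by_contra hne
  have h1 := Real.add_one_lt_exp (sub_ne_zero.mpr hne)
  have h2 : Real.exp a * (x - a + 1) < Real.exp a * Real.exp (x - a) :=
    mul_lt_mul_of_pos_left h1 (Real.exp_pos a)
  have h3 : a + (x - a) = x := by ring
  rw [← Real.exp_add, h3] at h2
  linarith

/-- Algorithm 1 is correct: with `θ` sorted decreasingly via a permutation `σ`,
`n = max{k ∈ [K] : 1 + k θ_[k] > Σ_{i≤k} θ_[i]}` and `τ = (Σ_{i≤n} θ_[i] − 1)/n`, the vector
`π_i = max{θ_i − τ, 0}` is the unique minimizer of `min_{π ∈ Δ^K} ln Σ_i exp(θ_i + 1 − π_i)`. -/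
theorem algorithm_computes_unique_minimizer
    {K : ℕ} (hK : 0 < K) (θ : E K)
    (σ : Equiv.Perm (Fin K)) (hσ : Antitone fun i => θ (σ i))
    (θs : ℕ → ℝ) (hθs : ∀ (i : ℕ) (h : i < K), θs i = θ (σ ⟨i, h⟩))
    (n : ℕ) (hn1 : 1 ≤ n) (hnK : n ≤ K)
    (hnmem : (∑ i ∈ Finset.range n, θs i) < 1 + (n : ℝ) * θs (n - 1))
    (hnmax : ∀ m : ℕ, 1 ≤ m → m ≤ K →
      (∑ i ∈ Finset.range m, θs i) < 1 + (m : ℝ) * θs (m - 1) → m ≤ n)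
    (τ : ℝ) (hτ : τ = ((∑ i ∈ Finset.range n, θs i) - 1) / n) :
    ((fun i => max (θ i - τ) 0) ∈ stdSimplex ℝ (Fin K) ∧
      ∀ π' ∈ stdSimplex ℝ (Fin K),
        Real.log (∑ i, Real.exp (θ i + 1 - max (θ i - τ) 0))
          ≤ Real.log (∑ i, Real.exp (θ i + 1 - π' i))) ∧
    ∀ π : Fin K → ℝ, π ∈ stdSimplex ℝ (Fin K) →
      (∀ π' ∈ stdSimplex ℝ (Fin K),
        Real.log (∑ i, Real.exp (θ i + 1 - π i))
          ≤ Real.log (∑ i, Real.exp (θ i + 1 - π' i))) →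
      π = fun i => max (θ i - τ) 0 := by
  have : Nonempty (Fin K) := ⟨⟨0, hK⟩⟩
  set P : Fin K → ℝ := fun i => max (θ i - τ) 0 with hPdef
  have hPe : ∀ i, max (θ i - τ) 0 = P i := fun i => rfl
  simp only [hPe]
  have hnR : (0 : ℝ) < n := by exact_mod_cast hn1
  set S : ℝ := ∑ i ∈ Finset.range n, θs i with hS
  -- monotonicity transferred to θs
  have hmono : ∀ i j : ℕ, i ≤ j → j < K → θs j ≤ θs i := by
    intro i j hij hj
    have hi : i < K := lt_of_le_of_lt hij hj
    rw [hθs i hi, hθs j hj]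
    exact hσ (show (⟨i, hi⟩ : Fin K) ≤ ⟨j, hj⟩ from hij)
  have hτlt : τ < θs (n - 1) := by
    rw [hτ, div_lt_iff₀ hnR]
    have hcomm : (n : ℝ) * θs (n - 1) = θs (n - 1) * (n : ℝ) := mul_comm _ _
    linarith [hnmem]
  have hnpred : n - 1 < K := by omega
  have hgt : ∀ i : ℕ, i < n → τ < θs i := fun i hi =>
    lt_of_lt_of_le hτlt (hmono i (n - 1) (by omega) hnpred)
  have hle : ∀ i : ℕ, n ≤ i → i < K → θs i ≤ τ := by
    intro i hni hiK
    have hfail : ¬ ((∑ j ∈ Finset.range (n + 1), θs j)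
        < 1 + ((n + 1 : ℕ) : ℝ) * θs ((n + 1) - 1)) := by
      intro h
      have := hnmax (n + 1) (by omega) (by omega) h
      omega
    push_neg at hfail
    rw [Finset.sum_range_succ, show n + 1 - 1 = n from by omega] at hfail
    have hcast : ((n + 1 : ℕ) : ℝ) = (n : ℝ) + 1 := by push_cast; ring
    rw [hcast] at hfail
    have h1 : (n : ℝ) * θs n ≤ S - 1 := by linarith
    have h2 : θs n ≤ τ := by
      rw [hτ, le_div_iff₀ hnR]
      linarith [mul_comm (n : ℝ) (θs n)]
    exact le_trans (hmono n i hni hiK) h2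
  -- the vector sums to 1
  have hsum1 : ∑ i, P i = 1 := by
    have e1 : ∑ i, P i = ∑ i : Fin K, max (θ (σ i) - τ) 0 :=
      (Equiv.sum_comp σ (fun i => max (θ i - τ) 0)).symm
    have e2 : (∑ i : Fin K, max (θ (σ i) - τ) 0)
        = ∑ i ∈ Finset.range K, max (θs i - τ) 0 := by
      rw [← Fin.sum_univ_eq_sum_range (fun i => max (θs i - τ) 0) K]
      refine Finset.sum_congr rfl fun i _ => ?_
      rw [hθs i.val i.isLt, Fin.eta]
    have e3 : (∑ i ∈ Finset.range n, max (θs i - τ) 0)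
        + ∑ i ∈ Finset.Ico n K, max (θs i - τ) 0
        = ∑ i ∈ Finset.range K, max (θs i - τ) 0 := by
      rw [Finset.range_eq_Ico, Finset.range_eq_Ico]
      exact Finset.sum_Ico_consecutive (f := fun i => max (θs i - τ) 0) (Nat.zero_le n) hnK
    have e4 : (∑ i ∈ Finset.Ico n K, max (θs i - τ) 0) = 0 := by
      refine Finset.sum_eq_zero fun i hi => ?_
      rw [Finset.mem_Ico] at hi
      exact max_eq_right (by linarith [hle i hi.1 hi.2])
    have e5 : (∑ i ∈ Finset.range n, max (θs i - τ) 0)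
        = ∑ i ∈ Finset.range n, (θs i - τ) := by
      refine Finset.sum_congr rfl fun i hi => ?_
      rw [Finset.mem_range] at hi
      exact max_eq_left (by linarith [hgt i hi])
    have e6 : (∑ i ∈ Finset.range n, (θs i - τ)) = S - n * τ := by
      rw [Finset.sum_sub_distrib, Finset.sum_const, Finset.card_range, ← hS,
        nsmul_eq_mul]
    have e7 : (n : ℝ) * τ = S - 1 := by
      rw [hτ]; field_simp
    rw [e1, e2, ← e3, e4, e5, e6]
    linarith
  have hPmem : P ∈ stdSimplex ℝ (Fin K) := ⟨fun i => le_max_right _ _, hsum1⟩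
  -- pointwise facts about exp(θ i + 1 - P i)
  set lam : ℝ := Real.exp (τ + 1) with hlam
  have f1 : ∀ i, Real.exp (θ i + 1 - P i) ≤ lam := by
    intro i
    rcases le_total (θ i) τ with h | h
    · have h0 : P i = 0 := max_eq_right (by simp only [hPdef]; linarith)
      rw [h0]
      exact Real.exp_le_exp.mpr (by linarith)
    · have h0 : P i = θ i - τ := max_eq_left (by simp only [hPdef]; linarith)
      rw [h0, show θ i + 1 - (θ i - τ) = τ + 1 from by ring]
  have f2 : ∀ i, Real.exp (θ i + 1 - P i) * P i = lam * P i := by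
    intro i
    rcases le_total (θ i) τ with h | h
    · have h0 : P i = 0 := max_eq_right (by simp only [hPdef]; linarith)
      rw [h0]; ring
    · have h0 : P i = θ i - τ := max_eq_left (by simp only [hPdef]; linarith)
      rw [h0, show θ i + 1 - (θ i - τ) = τ + 1 from by ring]
  have keyeq : (∑ i, Real.exp (θ i + 1 - P i) * P i) = lam := by
    rw [Finset.sum_congr rfl fun i _ => f2 i, ← Finset.mul_sum, hsum1, mul_one]
  have keyle : ∀ π' ∈ stdSimplex ℝ (Fin K),
      (∑ i, Real.exp (θ i + 1 - P i) * π' i) ≤ lam := by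
    intro π' hπ'
    calc (∑ i, Real.exp (θ i + 1 - P i) * π' i)
        ≤ ∑ i, lam * π' i :=
          Finset.sum_le_sum fun i _ => mul_le_mul_of_nonneg_right (f1 i) (hπ'.1 i)
      _ = lam := by rw [← Finset.mul_sum, hπ'.2, mul_one]
  -- central inequality
  have hlhs : ∀ π' : Fin K → ℝ,
      (∑ i, Real.exp (θ i + 1 - P i) * ((θ i + 1 - π' i) - (θ i + 1 - P i) + 1))
      = (∑ i, Real.exp (θ i + 1 - P i)) + lam
        - ∑ i, Real.exp (θ i + 1 - P i) * π' i := by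
    intro π'
    have hterm : ∀ i : Fin K,
        Real.exp (θ i + 1 - P i) * ((θ i + 1 - π' i) - (θ i + 1 - P i) + 1)
        = Real.exp (θ i + 1 - P i) * P i - Real.exp (θ i + 1 - P i) * π' i
          + Real.exp (θ i + 1 - P i) := fun i => by ring
    rw [Finset.sum_congr rfl fun i _ => hterm i, Finset.sum_add_distrib,
      Finset.sum_sub_distrib, keyeq]
    ring
  have hge : ∀ π' ∈ stdSimplex ℝ (Fin K),
      (∑ i, Real.exp (θ i + 1 - P i)) ≤ ∑ i, Real.exp (θ i + 1 - π' i) := by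
    intro π' hπ'
    have hs : (∑ i, Real.exp (θ i + 1 - P i) * ((θ i + 1 - π' i) - (θ i + 1 - P i) + 1))
        ≤ ∑ i, Real.exp (θ i + 1 - π' i) :=
      Finset.sum_le_sum fun i _ => exp_lin_le' _ _
    rw [hlhs π'] at hs
    linarith [keyle π' hπ']
  have hpos : ∀ x : Fin K → ℝ, 0 < ∑ i, Real.exp (θ i + 1 - x i) := fun x =>
    Finset.sum_pos (fun i _ => Real.exp_pos _) Finset.univ_nonempty
  refine ⟨⟨hPmem, fun π' hπ' => Real.log_le_log (hpos P) (hge π' hπ')⟩, ?_⟩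
  -- uniqueness
  intro π hπ hopt
  have h1 : (∑ i, Real.exp (θ i + 1 - P i)) ≤ ∑ i, Real.exp (θ i + 1 - π i) :=
    hge π hπ
  have h2 : Real.log (∑ i, Real.exp (θ i + 1 - π i))
      ≤ Real.log (∑ i, Real.exp (θ i + 1 - P i)) := hopt P hPmem
  have h3 : (∑ i, Real.exp (θ i + 1 - π i)) ≤ ∑ i, Real.exp (θ i + 1 - P i) :=
    (Real.log_le_log_iff (hpos π) (hpos P)).mp h2
  have heq : (∑ i, Real.exp (θ i + 1 - π i)) = ∑ i, Real.exp (θ i + 1 - P i) :=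
    le_antisymm h3 h1
  have hsle : (∑ i, Real.exp (θ i + 1 - π i))
      ≤ ∑ i, Real.exp (θ i + 1 - P i) * ((θ i + 1 - π i) - (θ i + 1 - P i) + 1) := by
    rw [hlhs π]
    linarith [keyle π hπ]
  have hterm : ∀ i : Fin K,
      Real.exp (θ i + 1 - π i)
      ≤ Real.exp (θ i + 1 - P i) * ((θ i + 1 - π i) - (θ i + 1 - P i) + 1) := by
    intro i
    by_contra hc
    push_neg at hc
    have hrest : (∑ j ∈ Finset.univ.erase i, Real.exp (θ j + 1 - P j)
          * ((θ j + 1 - π j) - (θ j + 1 - P j) + 1))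
        ≤ ∑ j ∈ Finset.univ.erase i, Real.exp (θ j + 1 - π j) :=
      Finset.sum_le_sum fun j _ => exp_lin_le' _ _
    have hi1 := Finset.add_sum_erase Finset.univ
      (fun j => Real.exp (θ j + 1 - P j) * ((θ j + 1 - π j) - (θ j + 1 - P j) + 1))
      (Finset.mem_univ i)
    have hi2 := Finset.add_sum_erase Finset.univ
      (fun j => Real.exp (θ j + 1 - π j)) (Finset.mem_univ i)
    simp only at hi1 hi2
    linarith [hsle]
  have hπP : ∀ i, π i = P i := by
    intro i
    have := exp_lin_eq' (hterm i)
    linarith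
  funext i
  exact hπP i
end
end

section
/- For every θ ∈ ℝ^K, there exists a unique τ ∈ ℝ such that Σ_{i=1}^K max{θ_i − τ, 0} = 1; moreover this τ satisfies τ < max_{i∈{1,…,K}} θ_i. -/
open scoped BigOperators
noncomputable section

/-- For every `θ ∈ ℝ^K` there is a unique `τ ∈ ℝ` with `Σ_i max{θ_i − τ, 0} = 1`; moreover
this `τ` satisfies `τ < max_i θ_i`. -/
theorem unique_threshold_exists
    {K : ℕ} (hK : 0 < K) (θ : Fin K → ℝ) :
    (∃! τ : ℝ, ∑ i, max (θ i - τ) 0 = 1) ∧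
    ∀ τ : ℝ, (∑ i, max (θ i - τ) 0 = 1) → ∃ i, τ < θ i := by
  have : Nonempty (Fin K) := ⟨⟨0, hK⟩⟩
  have hne : (Finset.univ : Finset (Fin K)).Nonempty := Finset.univ_nonempty
  set f : ℝ → ℝ := fun τ => ∑ i, max (θ i - τ) 0 with hf
  set M := Finset.univ.sup' hne θ with hM
  obtain ⟨j, -, hj⟩ := Finset.exists_mem_eq_sup' hne θ
  have hcont : Continuous f := by
    apply continuous_finset_sum
    intro i _
    exact (continuous_const.sub continuous_id).max continuous_const
  have hfM : f M = 0 := by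
    apply Finset.sum_eq_zero
    intro i _
    have h : θ i ≤ M := Finset.le_sup' θ (Finset.mem_univ i)
    simp [max_eq_right, sub_nonpos.mpr h]
  have hfM1 : 1 ≤ f (M - 1) := by
    have h1 : max (θ j - (M - 1)) 0 = 1 := by
      rw [← hj, ← hM]; norm_num
    calc (1:ℝ) = max (θ j - (M - 1)) 0 := h1.symm
    _ ≤ f (M - 1) := Finset.single_le_sum (f := fun i => max (θ i - (M - 1)) 0) (fun i _ => le_max_right _ _) (Finset.mem_univ j)
  -- any τ with f τ = 1 has some coordinate above it
  have hbig : ∀ τ : ℝ, f τ = 1 → ∃ i, τ < θ i := by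
    intro τ hτ
    by_contra h
    push_neg at h
    have : f τ = 0 := Finset.sum_eq_zero fun i _ => by
      simp [max_eq_right, sub_nonpos.mpr (h i)]
    rw [this] at hτ; norm_num at hτ
  -- strict monotonicity where positive
  have hstrict : ∀ a b : ℝ, a < b → (∃ i, b < θ i) → f b < f a := by
    rintro a b hab ⟨i0, hi0⟩
    apply Finset.sum_lt_sum
    · intro i _
      exact max_le_max (by linarith) le_rfl
    · refine ⟨i0, Finset.mem_univ i0, ?_⟩
      have h1 : max (θ i0 - b) 0 = θ i0 - b := max_eq_left (by linarith)
      have h2 : θ i0 - a ≤ max (θ i0 - a) 0 := le_max_left _ _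
      linarith
  -- existence via IVT
  have hmem : (1:ℝ) ∈ Set.Icc (f M) (f (M - 1)) := ⟨by rw [hfM]; norm_num, hfM1⟩
  obtain ⟨τ, -, hτ⟩ := intermediate_value_Icc' (by linarith : M - 1 ≤ M)
    hcont.continuousOn hmem
  refine ⟨⟨τ, hτ, ?_⟩, hbig⟩
  intro τ' hτ0
  have hτ' : f τ' = 1 := hτ0
  rcases lt_trichotomy τ' τ with h | h | h
  · exfalso
    have := hstrict τ' τ h (hbig τ hτ)
    rw [hτ, hτ'] at this; exact lt_irrefl 1 this
  · exact h
  · exfalso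
    have := hstrict τ τ' h (hbig τ' hτ')
    rw [hτ, hτ'] at this; exact lt_irrefl 1 this
end
end
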